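/- arXiv:2604.10266 — 3 statements merged into one kernel-verified Lean document; each statement's English description precedes it below -/
import Mathlib

section
/- Assume in addition that g is locally Hölder continuous of some order β ∈ (0, H). Then the limit process X is continuous at every point of the set {t ≥ 0 : X_t > 0} (in particular X is continuous at t = 0, where X_0 = X₀ > 0). -/
open MeasureTheory Filter Set

/-- `X` is a continuous solution on `[0,T]` of the ε-approximating equation
`X_t = X₀ + a ∫₀ᵗ (s+ε)^{2H-1} / (X_s 1_{X_s>0} + ε) ds − b ∫₀ᵗ X_s ds + σ g(t)`. -/
def approxSol (X₀ a b σ H : ℝ) (g : ℝ → ℝ) (T ε : ℝ) (X : ℝ → ℝ) : Prop :=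
  ContinuousOn X (Set.Icc 0 T) ∧
    ∀ t ∈ Set.Icc (0:ℝ) T,
      X t = X₀ + a * (∫ s in (0:ℝ)..t,
            (s + ε) ^ (2 * H - 1) / ((if 0 < X s then X s else 0) + ε))
          - b * (∫ s in (0:ℝ)..t, X s) + σ * g t

noncomputable def clampT (T t : ℝ) : ℝ := max 0 (min t T)

lemma clampT_continuous (T : ℝ) : Continuous (clampT T) := by
  unfold clampT; fun_prop

lemma clampT_mem (T : ℝ) (hT : 0 ≤ T) (t : ℝ) : clampT T t ∈ Set.Icc 0 T := by
  unfold clampT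
  constructor
  · exact le_max_left _ _
  · exact max_le hT (min_le_right _ _)

lemma clampT_eq (T t : ℝ) (ht : t ∈ Set.Icc 0 T) : clampT T t = t := by
  unfold clampT
  rw [min_eq_left ht.2, max_eq_right ht.1]

/-- globally-continuous version of the singular drift. -/
noncomputable def sing (H ε : ℝ) (u : ℝ → ℝ) (s : ℝ) : ℝ :=
  (max ε (s + ε)) ^ (2*H - 1) / (max (u s) 0 + ε)

lemma sing_nonneg (H ε : ℝ) (hε : 0 < ε) (u : ℝ → ℝ) (s : ℝ) : 0 ≤ sing H ε u s := by
  apply div_nonneg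
  · exact Real.rpow_nonneg (le_max_of_le_left hε.le) _
  · positivity

lemma sing_continuous (H ε : ℝ) (hε : 0 < ε) {u : ℝ → ℝ} (hu : Continuous u) :
    Continuous (sing H ε u) := by
  unfold sing
  apply Continuous.div
  · apply Continuous.rpow_const (by fun_prop)
    intro s; exact Or.inl (lt_max_of_lt_left hε).ne'
  · fun_prop
  · intro s; positivity

section
variable {X₀ a b σ H : ℝ} {g : ℝ → ℝ} {T ε : ℝ} {u : ℝ → ℝ}

lemma tilde_continuous (hT : 0 ≤ T) (hu : ContinuousOn u (Set.Icc 0 T)) :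
    Continuous (u ∘ clampT T) :=
  hu.comp_continuous (clampT_continuous T) (clampT_mem T hT)

lemma tilde_eq (t : ℝ) (ht : t ∈ Set.Icc 0 T) : (u ∘ clampT T) t = u t := by
  simp [Function.comp, clampT_eq T t ht]

/-- the integral equation, in terms of the globally continuous modifications. -/
lemma approxSol_tilde (hT : 0 ≤ T) (hε : 0 < ε)
    (hu : approxSol X₀ a b σ H g T ε u) (t : ℝ) (ht : t ∈ Set.Icc 0 T) :
    (u ∘ clampT T) t = X₀ + a * (∫ s in (0:ℝ)..t, sing H ε (u ∘ clampT T) s)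
      - b * (∫ s in (0:ℝ)..t, (u ∘ clampT T) s) + σ * g t := by
  rw [tilde_eq t ht, hu.2 t ht]
  have h1 : (∫ s in (0:ℝ)..t, (s + ε) ^ (2 * H - 1) / ((if 0 < u s then u s else 0) + ε))
      = ∫ s in (0:ℝ)..t, sing H ε (u ∘ clampT T) s := by
    apply intervalIntegral.integral_congr
    intro s hs
    rw [Set.uIcc_of_le ht.1] at hs
    have hsI : s ∈ Set.Icc 0 T := ⟨hs.1, hs.2.trans ht.2⟩
    show (s + ε) ^ (2 * H - 1) / ((if 0 < u s then u s else 0) + ε)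
        = sing H ε (u ∘ clampT T) s
    unfold sing
    rw [tilde_eq s hsI, max_eq_right (by linarith [hsI.1] : ε ≤ s + ε)]
    congr 2
    rcases le_or_gt (u s) 0 with h | h
    · rw [if_neg (not_lt.mpr h), max_eq_right h]
    · rw [if_pos h, max_eq_left h.le]
  have h2 : (∫ s in (0:ℝ)..t, u s) = ∫ s in (0:ℝ)..t, (u ∘ clampT T) s := by
    apply intervalIntegral.integral_congr
    intro s hs
    rw [Set.uIcc_of_le ht.1] at hs
    exact (tilde_eq s ⟨hs.1, hs.2.trans ht.2⟩).symm
  rw [h1, h2]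

lemma approxSol_zero (hT : 0 ≤ T) (hg0 : g 0 = 0)
    (hu : approxSol X₀ a b σ H g T ε u) : u 0 = X₀ := by
  have := hu.2 0 ⟨le_refl _, hT⟩
  simpa [hg0] using this

end

lemma comparison (X₀ a b σ H : ℝ) (ha : 0 ≤ a) (hH : H < 1/2)
    (g : ℝ → ℝ) (T ε ε' : ℝ) (hT : 0 ≤ T) (hε : 0 < ε) (hεε' : ε ≤ ε')
    (u v : ℝ → ℝ) (hu : approxSol X₀ a b σ H g T ε u)
    (hv : approxSol X₀ a b σ H g T ε' v) :
    ∀ t ∈ Set.Icc (0:ℝ) T, v t ≤ u t := by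
  have hε' : 0 < ε' := hε.trans_le hεε'
  set ut : ℝ → ℝ := u ∘ clampT T with hut
  set vt : ℝ → ℝ := v ∘ clampT T with hvt
  have hutc : Continuous ut := tilde_continuous hT hu.1
  have hvtc : Continuous vt := tilde_continuous hT hv.1
  have hsu : Continuous (sing H ε ut) := sing_continuous H ε hε hutc
  have hsv : Continuous (sing H ε' vt) := sing_continuous H ε' hε' hvtc
  set Φ : ℝ → ℝ := fun t =>
    a * ((∫ s in (0:ℝ)..t, sing H ε ut s) - (∫ s in (0:ℝ)..t, sing H ε' vt s))
      - b * ((∫ s in (0:ℝ)..t, ut s) - (∫ s in (0:ℝ)..t, vt s)) with hΦ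
  have hΦeq : ∀ t ∈ Set.Icc (0:ℝ) T, Φ t = ut t - vt t := by
    intro t ht
    have h1 := approxSol_tilde hT hε hu t ht
    have h2 := approxSol_tilde hT hε' hv t ht
    rw [← hut] at h1
    rw [← hvt] at h2
    simp only [hΦ]
    rw [h1, h2]
    ring
  have hΦd : ∀ t, HasDerivAt Φ
      (a * (sing H ε ut t - sing H ε' vt t) - b * (ut t - vt t)) t := by
    intro t
    exact ((((hsu.integral_hasStrictDerivAt 0 t).hasDerivAt.sub
      (hsv.integral_hasStrictDerivAt 0 t).hasDerivAt).const_mul a).sub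
      (((hutc.integral_hasStrictDerivAt 0 t).hasDerivAt.sub
      (hvtc.integral_hasStrictDerivAt 0 t).hasDerivAt).const_mul b))
  have hΦc : Continuous Φ := by
    have : Differentiable ℝ Φ := fun t => (hΦd t).differentiableAt
    exact this.continuous
  set E : ℝ → ℝ := fun t => Real.exp (b*t) * Φ t with hE
  have hEc : Continuous E := by fun_prop
  have hEd : ∀ t, HasDerivAt E
      (Real.exp (b*t) * b * Φ t + Real.exp (b*t) *
        (a * (sing H ε ut t - sing H ε' vt t) - b * (ut t - vt t))) t := by
    intro t
    have h1 : HasDerivAt (fun t => Real.exp (b*t)) (Real.exp (b*t) * b) t := by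
      have := ((hasDerivAt_id t).const_mul b).exp
      simp only [id_eq, mul_one] at this
      exact this.congr_deriv (by ring)
    exact h1.mul (hΦd t)
  -- main claim
  suffices hmain : ∀ t ∈ Set.Icc (0:ℝ) T, 0 ≤ Φ t by
    intro t ht
    have := hmain t ht
    rw [hΦeq t ht, hut, hvt, tilde_eq t ht, tilde_eq t ht] at this
    linarith
  by_contra hcon
  push_neg at hcon
  obtain ⟨t', ht', hΦt'⟩ := hcon
  have hEt' : E t' < 0 := mul_neg_of_pos_of_neg (Real.exp_pos _) hΦt'
  set S : Set ℝ := {s | s ∈ Set.Icc 0 t' ∧ 0 ≤ E s} with hS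
  have hScl : IsClosed S := by
    have : S = Set.Icc 0 t' ∩ E ⁻¹' (Set.Ici 0) := rfl
    rw [this]
    exact isClosed_Icc.inter (isClosed_Ici.preimage hEc)
  have h0S : (0:ℝ) ∈ S := by
    constructor
    · exact ⟨le_refl _, ht'.1⟩
    · have h0 : Φ 0 = 0 := by
        simp only [hΦ, intervalIntegral.integral_same]; ring
      simp [hE, h0]
  have hbdd : BddAbove S := BddAbove.mono (fun s hs => hs.1) bddAbove_Icc
  set τ := sSup S with hτ
  have hτS : τ ∈ S := hScl.csSup_mem ⟨0, h0S⟩ hbdd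
  have hτ0 : 0 ≤ τ := hτS.1.1
  have hτt' : τ < t' := by
    rcases lt_or_eq_of_le hτS.1.2 with h | h
    · exact h
    · exfalso; rw [h] at hτS; exact absurd hτS.2 (not_le.mpr hEt')
  have hneg : ∀ s ∈ Set.Ioc τ t', Φ s < 0 := by
    intro s hs
    by_contra h
    push_neg at h
    have hsS : s ∈ S := ⟨⟨hτ0.trans hs.1.le, hs.2⟩,
      mul_nonneg (Real.exp_pos _).le h⟩
    exact absurd (le_csSup hbdd hsS) (not_le.mpr hs.1)
  have hmono : MonotoneOn E (Set.Icc τ t') := by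
    apply monotoneOn_of_deriv_nonneg (convex_Icc τ t') hEc.continuousOn
      (fun x _ => (hEd x).differentiableAt.differentiableWithinAt)
    intro x hx
    rw [interior_Icc] at hx
    rw [(hEd x).deriv]
    have hx0 : 0 ≤ x := hτ0.trans hx.1.le
    have hxT : x ∈ Set.Icc (0:ℝ) T := ⟨hx0, hx.2.le.trans ht'.2⟩
    have hΦx : Φ x = ut x - vt x := hΦeq x hxT
    have hΦxneg : Φ x < 0 := hneg x ⟨hx.1, hx.2.le⟩
    have huv : ut x < vt x := by linarith [hΦx ▸ hΦxneg]
    have hsing : sing H ε' vt x ≤ sing H ε ut x := by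
      unfold sing
      rw [max_eq_right (by linarith : ε ≤ x + ε),
        max_eq_right (by linarith : ε' ≤ x + ε')]
      apply div_le_div₀
      · exact Real.rpow_nonneg (by linarith) _
      · exact Real.rpow_le_rpow_of_nonpos (by linarith) (by linarith) (by linarith)
      · positivity
      · have : max (ut x) 0 ≤ max (vt x) 0 := max_le_max huv.le (le_refl _)
        linarith
    have : 0 ≤ a * (sing H ε ut x - sing H ε' vt x) :=
      mul_nonneg ha (by linarith)
    have hexp := (Real.exp_pos (b*x)).le
    rw [hΦx]
    nlinarith [Real.exp_pos (b*x)]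
  have h1 : E τ ≤ E t' := hmono ⟨le_refl _, hτt'.le⟩ ⟨hτt'.le, le_refl _⟩ hτt'.le
  linarith [hτS.2]

lemma rpow_subadd {x y p : ℝ} (hx : 0 ≤ x) (hy : 0 ≤ y) (hp : 0 ≤ p) (hp1 : p ≤ 1) :
    (x + y) ^ p ≤ x ^ p + y ^ p := by
  have h := NNReal.rpow_add_le_add_rpow x.toNNReal y.toNNReal hp hp1
  have h2 := NNReal.coe_le_coe.mpr h
  push_cast at h2
  rwa [Real.coe_toNNReal x hx, Real.coe_toNNReal y hy] at h2

/-- key integral bound for the singular kernel. -/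
lemma sing_kernel_integral_le {H ε r t : ℝ} (hH0 : 0 < H) (hH : H < 1/2)
    (hε : 0 < ε) (hr : 0 ≤ r) (hrt : r ≤ t) :
    ∫ s in r..t, (max ε (s + ε)) ^ (2*H - 1) ≤ (t - r) ^ (2*H) / (2*H) := by
  have h1 : (∫ s in r..t, (max ε (s + ε)) ^ (2*H - 1))
      = ∫ s in r..t, (s + ε) ^ (2*H - 1) := by
    apply intervalIntegral.integral_congr
    intro s hs
    rw [Set.uIcc_of_le hrt] at hs
    have hm : max ε (s + ε) = s + ε := max_eq_right (by linarith [hs.1])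
    simp only [hm]
  rw [h1]
  have h2 : (∫ s in r..t, (s + ε) ^ (2*H - 1))
      = ∫ s in (r+ε)..(t+ε), s ^ (2*H - 1) := by
    rw [← intervalIntegral.integral_comp_add_right (fun s => s ^ (2*H-1)) ε]
  rw [h2, integral_rpow (Or.inl (by linarith))]
  have e1 : 2*H - 1 + 1 = 2*H := by ring
  rw [e1]
  have hsub : (t + ε) ^ (2*H) ≤ (r + ε) ^ (2*H) + (t - r) ^ (2*H) := by
    have : t + ε = (r + ε) + (t - r) := by ring
    rw [this]
    exact rpow_subadd (by linarith) (by linarith) (by linarith) (by linarith)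
  have h2H : 0 < 2*H := by linarith
  rw [div_le_div_iff₀ h2H h2H]
  nlinarith

lemma kernel_continuous (H ε : ℝ) (hε : 0 < ε) :
    Continuous (fun s : ℝ => (max ε (s + ε)) ^ (2*H - 1)) := by
  apply Continuous.rpow_const (by fun_prop)
  intro s; exact Or.inl (lt_max_of_lt_left hε).ne'

/-- increment identity -/
lemma approxSol_increment {X₀ a b σ H : ℝ} {g : ℝ → ℝ} {T ε : ℝ} {u : ℝ → ℝ}
    (hT : 0 ≤ T) (hε : 0 < ε)
    (hu : approxSol X₀ a b σ H g T ε u) (r t : ℝ) (hr : r ∈ Set.Icc 0 T)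
    (ht : t ∈ Set.Icc (0:ℝ) T) :
    (u ∘ clampT T) t - (u ∘ clampT T) r
      = a * (∫ s in r..t, sing H ε (u ∘ clampT T) s)
        - b * (∫ s in r..t, (u ∘ clampT T) s) + σ * (g t - g r) := by
  have hutc : Continuous (u ∘ clampT T) := tilde_continuous hT hu.1
  have hsc : Continuous (sing H ε (u ∘ clampT T)) := sing_continuous H ε hε hutc
  have e1 : (∫ s in (0:ℝ)..t, sing H ε (u ∘ clampT T) s)
      - (∫ s in (0:ℝ)..r, sing H ε (u ∘ clampT T) s)
      = ∫ s in r..t, sing H ε (u ∘ clampT T) s :=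
    intervalIntegral.integral_interval_sub_left (hsc.intervalIntegrable _ _)
      (hsc.intervalIntegrable _ _)
  have e2 : (∫ s in (0:ℝ)..t, (u ∘ clampT T) s)
      - (∫ s in (0:ℝ)..r, (u ∘ clampT T) s)
      = ∫ s in r..t, (u ∘ clampT T) s :=
    intervalIntegral.integral_interval_sub_left (hutc.intervalIntegrable _ _)
      (hutc.intervalIntegrable _ _)
  rw [approxSol_tilde hT hε hu t ht, approxSol_tilde hT hε hu r hr, ← e1, ← e2]
  ring

/-- uniform (in ε) upper bound for approximate solutions. -/
lemma upper_bound {X₀ a b σ H : ℝ} (hX₀ : 0 < X₀) (ha : 0 ≤ a) (hb : 0 ≤ b)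
    (hσ : 0 ≤ σ) (hH0 : 0 < H) (hH : H < 1/2) {g : ℝ → ℝ} (hg0 : g 0 = 0)
    {T ε : ℝ} (hT : 0 ≤ T) (hε : 0 < ε) {G : ℝ}
    (hG : ∀ s ∈ Set.Icc (0:ℝ) T, |g s| ≤ G) {u : ℝ → ℝ}
    (hu : approxSol X₀ a b σ H g T ε u) :
    ∀ t ∈ Set.Icc (0:ℝ) T, u t ≤ X₀ + 1 + a * (T ^ (2*H) / (2*H)) + 2*σ*G := by
  have hG0 : 0 ≤ G := le_trans (abs_nonneg _) (hG 0 ⟨le_refl _, hT⟩)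
  set B := X₀ + 1 + a * (T ^ (2*H) / (2*H)) + 2*σ*G with hB
  have hTH : 0 ≤ T ^ (2*H) / (2*H) := by positivity
  have hKB : X₀ + 1 ≤ B := by
    have : 0 ≤ a * (T ^ (2*H) / (2*H)) := mul_nonneg ha hTH
    have : 0 ≤ 2*σ*G := by positivity
    simp only [hB]; nlinarith [mul_nonneg ha hTH]
  by_contra hcon
  push_neg at hcon
  obtain ⟨t', ht', hBt'⟩ := hcon
  set ut : ℝ → ℝ := u ∘ clampT T with hut
  have hutc : Continuous ut := tilde_continuous hT hu.1
  have hsc : Continuous (sing H ε ut) := sing_continuous H ε hε hutc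
  have hutt' : B < ut t' := by rw [hut, tilde_eq t' ht']; exact hBt'
  set K := X₀ + 1 with hK
  set S : Set ℝ := {s | s ∈ Set.Icc 0 t' ∧ ut s ≤ K} with hS
  have hScl : IsClosed S := by
    have : S = Set.Icc 0 t' ∩ ut ⁻¹' (Set.Iic K) := rfl
    rw [this]; exact isClosed_Icc.inter (isClosed_Iic.preimage hutc)
  have h0S : (0:ℝ) ∈ S := by
    refine ⟨⟨le_refl _, ht'.1⟩, ?_⟩
    rw [hut, tilde_eq 0 ⟨le_refl _, hT⟩, approxSol_zero hT hg0 hu]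
    linarith
  have hbdd : BddAbove S := BddAbove.mono (fun s hs => hs.1) bddAbove_Icc
  set τ := sSup S with hτ
  have hτS : τ ∈ S := hScl.csSup_mem ⟨0, h0S⟩ hbdd
  have hτ0 : 0 ≤ τ := hτS.1.1
  have hτt' : τ < t' := by
    rcases lt_or_eq_of_le hτS.1.2 with h | h
    · exact h
    · exfalso; rw [h] at hτS; linarith [hτS.2]
  have hgt : ∀ s ∈ Set.Ioc τ t', K < ut s := by
    intro s hs
    by_contra h
    push_neg at h
    exact absurd (le_csSup hbdd ⟨⟨hτ0.trans hs.1.le, hs.2⟩, h⟩) (not_le.mpr hs.1)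
  have hτK : K ≤ ut τ := by
    have htend : Tendsto ut (nhdsWithin τ (Set.Ioi τ)) (nhds (ut τ)) :=
      (hutc.tendsto τ).mono_left nhdsWithin_le_nhds
    refine ge_of_tendsto htend ?_
    filter_upwards [Ioo_mem_nhdsGT_of_mem ⟨le_refl _, hτt'⟩] with s hs
    exact (hgt s ⟨hs.1, hs.2.le⟩).le
  have hge : ∀ s ∈ Set.Icc τ t', K ≤ ut s := by
    intro s hs
    rcases eq_or_lt_of_le hs.1 with h | h
    · rw [← h]; exact hτK
    · exact (hgt s ⟨h, hs.2⟩).le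
  have hτT : τ ∈ Set.Icc (0:ℝ) T := ⟨hτ0, hτS.1.2.trans ht'.2⟩
  have hinc := approxSol_increment hT hε hu τ t' hτT ht'
  -- bound each term
  have hb1 : (∫ s in τ..t', sing H ε ut s)
      ≤ ∫ s in τ..t', (max ε (s + ε)) ^ (2*H - 1) := by
    apply intervalIntegral.integral_mono_on hτt'.le (hsc.intervalIntegrable _ _)
      ((kernel_continuous H ε hε).intervalIntegrable _ _)
    intro s hs
    have hden : 1 ≤ max (ut s) 0 + ε := by
      have := hge s hs
      have h1 : 1 ≤ X₀ + 1 := by linarith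
      have : ut s ≤ max (ut s) 0 := le_max_left _ _
      have := hge s hs
      have : K ≤ max (ut s) 0 := le_trans this (le_max_left _ _)
      simp only [hK] at this
      linarith
    exact div_le_self (Real.rpow_nonneg (le_max_of_le_left hε.le) _) hden
  have hb2 : (∫ s in τ..t', (max ε (s + ε)) ^ (2*H - 1)) ≤ T ^ (2*H) / (2*H) := by
    refine (sing_kernel_integral_le hH0 hH hε hτ0 hτt'.le).trans ?_
    have h1 : t' - τ ≤ T := by linarith [ht'.2]
    have h2 : (t' - τ) ^ (2*H) ≤ T ^ (2*H) :=
      Real.rpow_le_rpow (by linarith) h1 (by linarith)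
    apply div_le_div_of_nonneg_right h2 (by linarith)
  have hb3 : 0 ≤ ∫ s in τ..t', ut s := by
    apply intervalIntegral.integral_nonneg hτt'.le
    intro s hs
    have := hge s hs
    simp only [hK] at this
    linarith
  have hb4 : σ * (g t' - g τ) ≤ 2*σ*G := by
    have h1 : |g t'| ≤ G := hG t' ht'
    have h2 : |g τ| ≤ G := hG τ hτT
    have h3 : g t' - g τ ≤ 2*G := by
      have := abs_le.mp h1; have := abs_le.mp h2
      cases abs_le.mp h1; cases abs_le.mp h2; linarith
    nlinarith
  have : ut t' ≤ B := by
    have hτle : ut τ ≤ K := hτS.2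
    have ha1 : a * (∫ s in τ..t', sing H ε ut s) ≤ a * (T ^ (2*H) / (2*H)) :=
      mul_le_mul_of_nonneg_left (hb1.trans hb2) ha
    have hbb : - (b * (∫ s in τ..t', ut s)) ≤ 0 := by
      simp only [neg_nonpos]; exact mul_nonneg hb hb3
    have := hinc
    simp only [hB]
    linarith
  linarith

/-- modulus-of-continuity bound on an interval where the solution is trapped in `[c,B]`. -/
lemma modulus {X₀ a b σ H : ℝ} {g : ℝ → ℝ} {T ε : ℝ} {u : ℝ → ℝ}
    (ha : 0 ≤ a) (hb : 0 ≤ b) (hσ : 0 ≤ σ) (hH0 : 0 < H) (hH : H < 1/2)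
    (hT : 0 ≤ T) (hε : 0 < ε)
    (hu : approxSol X₀ a b σ H g T ε u) {c B : ℝ} (hc : 0 < c)
    (r t : ℝ) (hr : r ∈ Set.Icc (0:ℝ) T) (ht : t ∈ Set.Icc (0:ℝ) T) (hrt : r ≤ t)
    (hlow : ∀ s ∈ Set.Icc r t, c ≤ u s) (hup : ∀ s ∈ Set.Icc r t, u s ≤ B) :
    |u t - u r| ≤ a * ((t - r) ^ (2*H) / (2*H)) / c + b * B * (t - r)
      + σ * |g t - g r| := by
  set ut : ℝ → ℝ := u ∘ clampT T with hut
  have hutc : Continuous ut := tilde_continuous hT hu.1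
  have hsc : Continuous (sing H ε ut) := sing_continuous H ε hε hutc
  have hsub : Set.Icc r t ⊆ Set.Icc (0:ℝ) T := Set.Icc_subset_Icc hr.1 ht.2
  have huts : ∀ s ∈ Set.Icc r t, ut s = u s := fun s hs => tilde_eq s (hsub hs)
  have hinc := approxSol_increment hT hε hu r t hr ht
  rw [← hut] at hinc
  -- singular term
  have hs1 : (∫ s in r..t, sing H ε ut s) ≤ (t - r) ^ (2*H) / (2*H) / c := by
    have hmono : (∫ s in r..t, sing H ε ut s)
        ≤ ∫ s in r..t, (max ε (s + ε)) ^ (2*H - 1) / c := by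
      apply intervalIntegral.integral_mono_on hrt (hsc.intervalIntegrable _ _)
        (((kernel_continuous H ε hε).div_const c).intervalIntegrable _ _)
      intro s hs
      have hden : c ≤ max (ut s) 0 + ε := by
        have h1 : c ≤ u s := hlow s hs
        have h2 : u s ≤ max (ut s) 0 := (huts s hs).symm ▸ le_max_left _ _
        linarith
      unfold sing
      exact div_le_div_of_nonneg_left (Real.rpow_nonneg (le_max_of_le_left hε.le) _)
        hc hden
    rw [intervalIntegral.integral_div] at hmono
    exact hmono.trans (div_le_div_of_nonneg_right
      (sing_kernel_integral_le hH0 hH hε hr.1 hrt) hc.le)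
  have hs0 : 0 ≤ ∫ s in r..t, sing H ε ut s :=
    intervalIntegral.integral_nonneg hrt (fun s _ => sing_nonneg H ε hε ut s)
  -- drift term
  have hd : |∫ s in r..t, ut s| ≤ B * (t - r) := by
    have := intervalIntegral.norm_integral_le_of_norm_le_const
      (C := B) (f := ut) (a := r) (b := t) ?_
    · rw [Real.norm_eq_abs] at this
      calc |∫ s in r..t, ut s| ≤ B * |t - r| := this
        _ = B * (t - r) := by rw [abs_of_nonneg (by linarith)]
    · intro s hs
      rw [Set.uIoc_of_le hrt] at hs
      have hsI : s ∈ Set.Icc r t := ⟨hs.1.le, hs.2⟩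
      rw [Real.norm_eq_abs, huts s hsI, abs_le]
      have h1 := hlow s hsI
      have h2 := hup s hsI
      constructor <;> linarith
  -- combine
  have e1 : u t - u r = ut t - ut r := by
    rw [huts t ⟨hrt, le_refl _⟩, huts r ⟨le_refl _, hrt⟩]
  rw [e1, hinc]
  have h1 : |a * (∫ s in r..t, sing H ε ut s) - b * (∫ s in r..t, ut s)
      + σ * (g t - g r)|
      ≤ a * (∫ s in r..t, sing H ε ut s) + b * |∫ s in r..t, ut s|
        + σ * |g t - g r| := by
    have := abs_add_le (a * (∫ s in r..t, sing H ε ut s) - b * (∫ s in r..t, ut s))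
      (σ * (g t - g r))
    have h2 := abs_sub (a * (∫ s in r..t, sing H ε ut s)) (b * (∫ s in r..t, ut s))
    have h3 : |a * (∫ s in r..t, sing H ε ut s)| = a * ∫ s in r..t, sing H ε ut s :=
      abs_of_nonneg (mul_nonneg ha hs0)
    have h4 : |b * (∫ s in r..t, ut s)| = b * |∫ s in r..t, ut s| := by
      rw [abs_mul, abs_of_nonneg hb]
    have h5 : |σ * (g t - g r)| = σ * |g t - g r| := by
      rw [abs_mul, abs_of_nonneg hσ]
    calc |a * (∫ s in r..t, sing H ε ut s) - b * (∫ s in r..t, ut s) + σ * (g t - g r)|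
        ≤ |a * (∫ s in r..t, sing H ε ut s) - b * (∫ s in r..t, ut s)|
          + |σ * (g t - g r)| := this
      _ ≤ |a * (∫ s in r..t, sing H ε ut s)| + |b * (∫ s in r..t, ut s)|
          + |σ * (g t - g r)| := by linarith [h2]
      _ = a * (∫ s in r..t, sing H ε ut s) + b * |∫ s in r..t, ut s|
          + σ * |g t - g r| := by rw [h3, h4, h5]
  refine h1.trans ?_
  have h6 : a * (∫ s in r..t, sing H ε ut s) ≤ a * ((t - r) ^ (2*H) / (2*H) / c) :=
    mul_le_mul_of_nonneg_left hs1 ha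
  have h7 : b * |∫ s in r..t, ut s| ≤ b * (B * (t - r)) :=
    mul_le_mul_of_nonneg_left hd hb
  have : a * ((t - r) ^ (2*H) / (2*H) / c) = a * ((t - r) ^ (2*H) / (2*H)) / c := by
    ring
  linarith

/-- **Theorem 3.7(b).** If `g` is locally Hölder of order `β ∈ (0,H)`, the limit
process `X` is continuous (within `[0,∞)`) at every point of `{t ≥ 0 : X_t > 0}`. -/
theorem limit_process_continuous_on_positivity_set
    (X₀ a b σ H : ℝ) (hX₀ : 0 < X₀) (ha : 0 < a) (hb : 0 ≤ b) (hσ : 0 < σ)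
    (hH0 : 0 < H) (hH : H < 1/2)
    (g : ℝ → ℝ) (hgc : ContinuousOn g (Set.Ici 0)) (hg0 : g 0 = 0)
    (Xe : ℝ → ℝ → ℝ)
    (hXe : ∀ ε > (0:ℝ), ∀ T > (0:ℝ), approxSol X₀ a b σ H g T ε (Xe ε))
    (X : ℝ → ℝ)
    (hX : ∀ t ≥ (0:ℝ),
      Tendsto (fun ε => Xe ε t) (nhdsWithin 0 (Set.Ioi 0)) (nhds (X t)))
    (β : ℝ) (hβ0 : 0 < β) (hβH : β < H)
    (hgH : ∀ T > (0:ℝ), ∃ C > (0:ℝ), ∀ s ∈ Set.Icc (0:ℝ) T, ∀ t ∈ Set.Icc (0:ℝ) T,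
      |g t - g s| ≤ C * |t - s| ^ β)
    :
    ∀ t : ℝ, 0 ≤ t → 0 < X t → ContinuousWithinAt X (Set.Ici 0) t := by
  intro t₀ ht₀ hpos
  set T := t₀ + 1 with hTdef
  have hT : 0 < T := by simp only [hTdef]; linarith
  have ht₀T : t₀ ∈ Set.Icc (0:ℝ) T := ⟨ht₀, by simp only [hTdef]; linarith⟩
  -- bound on g on [0,T]
  obtain ⟨G, hG⟩ : ∃ G, ∀ s ∈ Set.Icc (0:ℝ) T, |g s| ≤ G := by
    obtain ⟨G, hG⟩ := (isCompact_Icc (a := (0:ℝ)) (b := T)).exists_bound_of_continuousOn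
      (hgc.mono (fun s hs => hs.1))
    exact ⟨G, fun s hs => by simpa [Real.norm_eq_abs] using hG s hs⟩
  set B := X₀ + 1 + a * (T ^ (2*H) / (2*H)) + 2*σ*G with hBdef
  have hBu : ∀ ε, 0 < ε → ∀ s ∈ Set.Icc (0:ℝ) T, Xe ε s ≤ B := fun ε hε s hs =>
    upper_bound hX₀ ha.le hb hσ.le hH0 hH hg0 hT.le hε hG (hXe ε hε T hT) s hs
  set c := X t₀ with hcdef
  -- choose ε₀ with Xe ε₀ t₀ > c/2
  have hev : ∀ᶠ ε in nhdsWithin (0:ℝ) (Set.Ioi 0), c/2 < Xe ε t₀ :=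
    (hX t₀ ht₀).eventually (eventually_gt_nhds (by linarith))
  obtain ⟨ε₀, hval, hε₀mem⟩ := (hev.and eventually_mem_nhdsWithin).exists
  have hε₀pos : 0 < ε₀ := hε₀mem
  have hu₀ := hXe ε₀ hε₀pos T hT
  set ut₀ : ℝ → ℝ := Xe ε₀ ∘ clampT T with hut₀def
  have hut₀c : Continuous ut₀ := tilde_continuous hT.le hu₀.1
  have hut₀t₀ : c/4 < ut₀ t₀ := by
    rw [hut₀def, tilde_eq t₀ ht₀T]; linarith
  -- choose δ
  have hnhds : ut₀ ⁻¹' (Set.Ioi (c/4)) ∈ nhds t₀ :=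
    hut₀c.continuousAt.preimage_mem_nhds (Ioi_mem_nhds hut₀t₀)
  obtain ⟨δ', hδ'pos, hδ'⟩ := Metric.mem_nhds_iff.mp hnhds
  set δ := min δ' 1 with hδdef
  have hδpos : 0 < δ := lt_min hδ'pos one_pos
  have hδ1 : δ ≤ 1 := min_le_right _ _
  have hδδ' : δ ≤ δ' := min_le_left _ _
  have hmem : ∀ s : ℝ, 0 ≤ s → |s - t₀| < δ → s ∈ Set.Icc (0:ℝ) T := by
    intro s hs hd
    have := abs_lt.mp hd
    exact ⟨hs, by simp only [hTdef]; linarith⟩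
  have hlow : ∀ ε, 0 < ε → ε ≤ ε₀ → ∀ s, 0 ≤ s → |s - t₀| < δ → c/4 ≤ Xe ε s := by
    intro ε hε hεε₀ s hs hd
    have h1 : Xe ε₀ s ≤ Xe ε s :=
      comparison X₀ a b σ H ha.le hH g T ε ε₀ hT.le hε hεε₀ _ _
        (hXe ε hε T hT) hu₀ s (hmem s hs hd)
    have h2 : c/4 < ut₀ s := by
      have : s ∈ Metric.ball t₀ δ' := by
        rw [Metric.mem_ball, Real.dist_eq]; exact lt_of_lt_of_le hd hδδ'
      exact hδ' this
    rw [hut₀def, tilde_eq s (hmem s hs hd)] at h2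
    linarith
  -- modulus bound passes to the limit
  have hc4 : (0:ℝ) < c/4 := by linarith
  have key : ∀ t, 0 ≤ t → |t - t₀| < δ →
      |X t - X t₀| ≤ a * (|t - t₀| ^ (2*H) / (2*H)) / (c/4) + b * B * |t - t₀|
        + σ * |g t - g t₀| := by
    intro t ht hd
    have htT : t ∈ Set.Icc (0:ℝ) T := hmem t ht hd
    have hbe : ∀ ε, 0 < ε → ε ≤ ε₀ →
        |Xe ε t - Xe ε t₀| ≤ a * (|t - t₀| ^ (2*H) / (2*H)) / (c/4)
          + b * B * |t - t₀| + σ * |g t - g t₀| := by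
      intro ε hε hεε₀
      have hsol := hXe ε hε T hT
      rcases le_total t₀ t with hor | hor
      · have habs : |t - t₀| = t - t₀ := abs_of_nonneg (by linarith)
        have hm := modulus ha.le hb hσ.le hH0 hH hT.le hε hsol hc4 t₀ t ht₀T htT hor
          (fun s hs => hlow ε hε hεε₀ s (le_trans ht₀ hs.1)
            (by rw [abs_lt]; constructor <;> [linarith [hs.1]; linarith [hs.2, abs_lt.mp hd |>.2]]))
          (fun s hs => hBu ε hε s ⟨le_trans ht₀ hs.1, le_trans hs.2 htT.2⟩)
        rw [habs]
        exact hm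
      · have habs : |t - t₀| = t₀ - t := by
          rw [abs_sub_comm]; exact abs_of_nonneg (by linarith)
        have hm := modulus ha.le hb hσ.le hH0 hH hT.le hε hsol hc4 t t₀ htT ht₀T hor
          (fun s hs => hlow ε hε hεε₀ s (le_trans ht hs.1)
            (by rw [abs_lt]; constructor <;> [linarith [hs.1, abs_lt.mp hd |>.1]; linarith [hs.2]]))
          (fun s hs => hBu ε hε s ⟨le_trans ht hs.1, le_trans hs.2 ht₀T.2⟩)
        rw [abs_sub_comm, abs_sub_comm (g t) (g t₀), habs]
        exact hm
    have htend : Tendsto (fun ε => |Xe ε t - Xe ε t₀|) (nhdsWithin (0:ℝ) (Set.Ioi 0))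
        (nhds |X t - X t₀|) := ((hX t ht).sub (hX t₀ ht₀)).abs
    refine le_of_tendsto htend ?_
    filter_upwards [Ioc_mem_nhdsGT_of_mem (Set.left_mem_Ico.mpr hε₀pos)] with ε hε
    exact hbe ε hε.1 hε.2
  -- tendsto of the modulus
  have h1 : Tendsto (fun s => |s - t₀|) (nhdsWithin t₀ (Set.Ici 0)) (nhds 0) := by
    have : Tendsto (fun s => |s - t₀|) (nhds t₀) (nhds |t₀ - t₀|) :=
      ((continuous_id.sub continuous_const).abs).tendsto t₀
    simpa using this.mono_left nhdsWithin_le_nhds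
  have h2 : Tendsto (fun s => |s - t₀| ^ (2*H)) (nhdsWithin t₀ (Set.Ici 0)) (nhds 0) := by
    have hrp : Tendsto (fun x : ℝ => x ^ (2*H)) (nhds 0) (nhds ((0:ℝ) ^ (2*H))) :=
      (Real.continuousAt_rpow_const 0 (2*H) (Or.inr (by linarith))).tendsto
    rw [Real.zero_rpow (by linarith : 2*H ≠ 0)] at hrp
    exact hrp.comp h1
  have h3 : Tendsto (fun s => |g s - g t₀|) (nhdsWithin t₀ (Set.Ici 0)) (nhds 0) := by
    have hg' : Tendsto g (nhdsWithin t₀ (Set.Ici 0)) (nhds (g t₀)) := hgc t₀ ht₀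
    have h := (hg'.sub (tendsto_const_nhds (x := g t₀))).abs
    simpa using h
  have hω : Tendsto (fun s => a * (|s - t₀| ^ (2*H) / (2*H)) / (c/4) + b * B * |s - t₀|
      + σ * |g s - g t₀|) (nhdsWithin t₀ (Set.Ici 0))
      (nhds (a * ((0:ℝ) / (2*H)) / (c/4) + b * B * 0 + σ * 0)) := by
    exact (((h2.div_const (2*H)).const_mul a).div_const (c/4)).add (h1.const_mul (b*B))
      |>.add (h3.const_mul σ)
  have hω0 : Tendsto (fun s => a * (|s - t₀| ^ (2*H) / (2*H)) / (c/4) + b * B * |s - t₀|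
      + σ * |g s - g t₀|) (nhdsWithin t₀ (Set.Ici 0)) (nhds 0) := by
    simpa using hω
  have hev1 : ∀ᶠ s in nhdsWithin t₀ (Set.Ici 0),
      |X s - X t₀| ≤ a * (|s - t₀| ^ (2*H) / (2*H)) / (c/4) + b * B * |s - t₀|
        + σ * |g s - g t₀| := by
    filter_upwards [eventually_mem_nhdsWithin,
      eventually_nhdsWithin_of_eventually_nhds
        (Metric.eventually_nhds_iff.mpr ⟨δ, hδpos, fun {s} hs => hs⟩)] with s hs1 hs2
    exact key s hs1 (by rwa [← Real.dist_eq])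
  have habs : Tendsto (fun s => |X s - X t₀|) (nhdsWithin t₀ (Set.Ici 0)) (nhds 0) :=
    squeeze_zero' (Eventually.of_forall fun s => abs_nonneg _) hev1 hω0
  rw [ContinuousWithinAt, tendsto_iff_dist_tendsto_zero]
  simpa [Real.dist_eq] using habs
end

section
/- Assume in addition that g is locally Hölder continuous of some order β ∈ (0, H). Then the set of points of [0,∞) at which the limit process X is discontinuous has Lebesgue measure zero; consequently, X being also bounded on bounded intervals, X is Riemann integrable on every bounded interval [a,b] ⊂ [0,∞). -/
open MeasureTheory Filter Set

/-!
By the equation, `X^ε_t + b ∫₀ᵗ X^ε - σ g(t) = X₀ + a ∫₀ᵗ (s+ε)^{2H-1} / (X^ε_s 1_{X^ε_s>0} + ε) ds`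
is nondecreasing in `t`. On `[0,T]` the `X^ε` with `ε ≤ 1` are bounded uniformly in `ε`: after the
last time `X^ε` lies below `max 1 (X₀ + |σ| sup |g|)` the drift integrand is at most
`(s+ε)^{2H-1}`, whose integral is at most `(T+1)^{2H}/(2H)`. By dominated convergence the
monotonicity passes to `X + b ∫₀ᵗ X - σ g`, so `X` is a monotone function minus a continuous one,
and its points of discontinuity in `[0,∞)` form a countable set.
-/
open Topology

lemma ContinuousOn.exists_last_le {h : ℝ → ℝ} {a b L : ℝ} (hc : ContinuousOn h (Icc a b))
    (hab : a ≤ b) (ha : h a ≤ L) : ∃ τ ∈ Icc a b, h τ ≤ L ∧ ∀ s ∈ Ioc τ b, L < h s := by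
  have hclosed : IsClosed (Icc a b ∩ h ⁻¹' Iic L) :=
    hc.preimage_isClosed_of_isClosed isClosed_Icc isClosed_Iic
  obtain ⟨τ, ⟨hτ, hτL⟩, hmax⟩ :=
    (isCompact_Icc.of_isClosed_subset hclosed inter_subset_left).exists_isGreatest
      ⟨a, ⟨le_rfl, hab⟩, ha⟩
  refine ⟨τ, hτ, hτL, fun s hs => lt_of_not_ge fun hsL => ?_⟩
  exact hs.1.not_ge (hmax ⟨⟨hτ.1.trans hs.1.le, hs.2⟩, hsL⟩)

lemma integral_rpow_add_le {r ε a b : ℝ} (hr : -1 < r) (ha : 0 ≤ a + ε) :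
    ∫ s in a..b, (s + ε) ^ r ≤ (b + ε) ^ (r + 1) / (r + 1) := by
  rw [intervalIntegral.integral_comp_add_right (fun s => s ^ r), integral_rpow (Or.inl hr)]
  exact div_le_div_of_nonneg_right (sub_le_self _ (Real.rpow_nonneg ha _)) (by linarith)

lemma MonotoneOn.countable_not_continuousWithinAt_of_add {α : Type*} [LinearOrder α]
    [TopologicalSpace α] [OrderTopology α] {f k : α → ℝ} {s : Set α}
    (hmono : MonotoneOn (fun x => f x + k x) s) (hk : ContinuousOn k s) :
    {x ∈ s | ¬ContinuousWithinAt f s x}.Countable := by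
  refine hmono.countable_not_continuousWithinAt.mono ?_
  rintro x ⟨hx, hfx⟩
  exact ⟨hx, fun h => hfx ((h.sub (hk x hx)).congr (fun y _ => by simp) (by simp))⟩

lemma continuousOn_primitive_Ici {f : ℝ → ℝ} {a : ℝ}
    (hf : ∀ b ≥ a, IntervalIntegrable f volume a b) :
    ContinuousOn (fun b => ∫ x in a..b, f x) (Ici a) := by
  intro t ht
  have hta : a ≤ t := ht
  have hcont :=
    intervalIntegral.continuousOn_primitive_interval' (hf (t + 1) (by linarith)) left_mem_uIcc
  rw [uIcc_of_le (by linarith)] at hcont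
  exact (hcont t ⟨ht, by linarith⟩).mono_of_mem_nhdsWithin
    (inter_mem_nhdsWithin _ (Iic_mem_nhds (lt_add_one t)))

section UniformLimit

variable {ι : Type*} {l : Filter ι} {F : ι → ℝ → ℝ} {f : ℝ → ℝ} {a b M : ℝ}

lemma abs_le_of_tendsto [l.NeBot] (hM : ∀ᶠ i in l, ∀ x ∈ Icc a b, |F i x| ≤ M)
    (hlim : ∀ x ∈ Icc a b, Tendsto (F · x) l (𝓝 (f x))) : ∀ x ∈ Icc a b, |f x| ≤ M :=
  fun x hx => le_of_tendsto (hlim x hx).abs (hM.mono fun _ hi => hi x hx)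

lemma intervalIntegrable_of_tendsto [l.NeBot] [l.IsCountablyGenerated] (hab : a ≤ b)
    (hF : ∀ᶠ i in l, AEStronglyMeasurable (F i) (volume.restrict (Icc a b)))
    (hM : ∀ᶠ i in l, ∀ x ∈ Icc a b, |F i x| ≤ M)
    (hlim : ∀ x ∈ Icc a b, Tendsto (F · x) l (𝓝 (f x))) :
    IntervalIntegrable f volume a b := by
  obtain ⟨v, hv, hvF⟩ := exists_seq_forall_of_frequently hF.frequently
  have hmeas : AEStronglyMeasurable f (volume.restrict (Icc a b)) :=
    aestronglyMeasurable_of_tendsto_ae atTop hvF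
      ((ae_restrict_iff' measurableSet_Icc).2 (ae_of_all _ fun x hx => (hlim x hx).comp hv))
  refine (intervalIntegrable_iff_integrableOn_Icc_of_le hab).2
    (Integrable.mono' (g := fun _ => M) (integrableOn_const measure_Icc_lt_top.ne) hmeas ?_)
  exact (ae_restrict_iff' measurableSet_Icc).2 (ae_of_all _ (abs_le_of_tendsto hM hlim))

lemma tendsto_intervalIntegral_of_tendsto [l.IsCountablyGenerated]
    (hF : ∀ᶠ i in l, AEStronglyMeasurable (F i) (volume.restrict (Icc a b)))
    (hM : ∀ᶠ i in l, ∀ x ∈ Icc a b, |F i x| ≤ M)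
    (hlim : ∀ x ∈ Icc a b, Tendsto (F · x) l (𝓝 (f x))) {t : ℝ} (ht : t ∈ Icc a b) :
    Tendsto (fun i => ∫ x in a..t, F i x) l (𝓝 (∫ x in a..t, f x)) := by
  have hsub : uIoc a t ⊆ Icc a b := by
    rw [uIoc_of_le ht.1]; exact fun x hx => ⟨hx.1.le, hx.2.trans ht.2⟩
  refine intervalIntegral.tendsto_integral_filter_of_dominated_convergence (fun _ => M)
    (hF.mono fun i hi => hi.mono_measure (Measure.restrict_mono hsub le_rfl))
    (hM.mono fun i hi => ae_of_all _ fun x hx => hi x (hsub hx)) intervalIntegrable_const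
    (ae_of_all _ fun x hx => hlim x (hsub hx))

end UniformLimit

noncomputable def approxDrift (H ε s x : ℝ) : ℝ :=
  (s + ε) ^ (2 * H - 1) / ((if 0 < x then x else 0) + ε)

section ApproxDrift

variable {H ε s x : ℝ}

lemma approxDrift_nonneg (hε : 0 < ε) (hs : 0 ≤ s + ε) : 0 ≤ approxDrift H ε s x := by
  refine div_nonneg (Real.rpow_nonneg hs _) ?_
  split_ifs <;> linarith

lemma approxDrift_le (hε : 0 ≤ ε) (hs : 0 ≤ s + ε) (hx : 1 ≤ x) :
    approxDrift H ε s x ≤ (s + ε) ^ (2 * H - 1) := by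
  rw [approxDrift, if_pos (by linarith)]
  exact div_le_self (Real.rpow_nonneg hs _) (by linarith)

lemma ContinuousOn.approxDrift {h : ℝ → ℝ} {S : Set ℝ} (hh : ContinuousOn h S) (hε : 0 < ε)
    (hS : ∀ s ∈ S, 0 ≤ s) : ContinuousOn (fun s => approxDrift H ε s (h s)) S := by
  have hpos : ∀ x : ℝ, (if 0 < x then x else 0) = max x 0 := fun x => by
    split_ifs with hx
    · exact (max_eq_left hx.le).symm
    · exact (max_eq_right (not_lt.1 hx)).symm
  simp only [_root_.approxDrift, hpos]
  refine ((continuousOn_id.add continuousOn_const).rpow_const fun s hs => ?_).div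
    ((hh.sup continuousOn_const).add continuousOn_const) fun s _ => ?_
  · exact Or.inl (by linarith [hS s hs]: (0:ℝ) < s + ε).ne'
  · positivity

end ApproxDrift

namespace approxSol

variable {X₀ a b σ H T ε C : ℝ} {g h : ℝ → ℝ}

lemma eq (hsol : approxSol X₀ a b σ H g T ε h) {t : ℝ} (ht : t ∈ Icc 0 T) :
    h t = X₀ + a * (∫ s in (0:ℝ)..t, approxDrift H ε s (h s)) - b * (∫ s in (0:ℝ)..t, h s)
      + σ * g t :=
  hsol.2 t ht

lemma intervalIntegrable (hsol : approxSol X₀ a b σ H g T ε h) {u v : ℝ} (hu : u ∈ Icc 0 T)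
    (hv : v ∈ Icc 0 T) : IntervalIntegrable h volume u v :=
  (hsol.1.mono (uIcc_subset_Icc hu hv)).intervalIntegrable

lemma intervalIntegrable_approxDrift (hsol : approxSol X₀ a b σ H g T ε h) (hε : 0 < ε)
    {u v : ℝ} (hu : u ∈ Icc 0 T) (hv : v ∈ Icc 0 T) :
    IntervalIntegrable (fun s => approxDrift H ε s (h s)) volume u v :=
  ((hsol.1.approxDrift hε fun _ hs => hs.1).mono (uIcc_subset_Icc hu hv)).intervalIntegrable

lemma sub_eq (hsol : approxSol X₀ a b σ H g T ε h) (hε : 0 < ε) {τ t : ℝ} (hτ : τ ∈ Icc 0 T)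
    (ht : t ∈ Icc 0 T) :
    h t - h τ = a * (∫ s in τ..t, approxDrift H ε s (h s)) - b * (∫ s in τ..t, h s)
      + σ * (g t - g τ) := by
  have h0 : (0:ℝ) ∈ Icc 0 T := ⟨le_rfl, ht.1.trans ht.2⟩
  rw [hsol.eq ht, hsol.eq hτ,
    ← intervalIntegral.integral_interval_sub_left (hsol.intervalIntegrable_approxDrift hε h0 ht)
      (hsol.intervalIntegrable_approxDrift hε h0 hτ),
    ← intervalIntegral.integral_interval_sub_left (hsol.intervalIntegrable h0 ht)
      (hsol.intervalIntegrable h0 hτ)]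
  ring

lemma monotoneOn (hsol : approxSol X₀ a b σ H g T ε h) (ha : 0 ≤ a) (hε : 0 < ε) :
    MonotoneOn (fun t => h t + b * (∫ s in (0:ℝ)..t, h s) - σ * g t) (Icc 0 T) := by
  intro s hs t ht hst
  have hdrift : ∫ u in (0:ℝ)..s, approxDrift H ε u (h u)
      ≤ ∫ u in (0:ℝ)..t, approxDrift H ε u (h u) :=
    intervalIntegral.integral_mono_interval le_rfl hs.1 hst
      ((ae_restrict_iff' measurableSet_Ioc).2 (ae_of_all _ fun u hu =>
        approxDrift_nonneg hε (by linarith [hu.1])))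
      (hsol.intervalIntegrable_approxDrift hε ⟨le_rfl, hs.1.trans hs.2⟩ ht)
  simp only [hsol.eq hs, hsol.eq ht]
  linarith [mul_le_mul_of_nonneg_left hdrift ha]

lemma apply_le (hsol : approxSol X₀ a b σ H g T ε h) (ha : 0 ≤ a) (hb : 0 ≤ b) (hH : 0 < H)
    (hε : 0 < ε) (hε1 : ε ≤ 1) (hgC : ∀ t ∈ Icc 0 T, |g t| ≤ C) {t : ℝ} (ht : t ∈ Icc 0 T) :
    h t ≤ max 1 (X₀ + |σ| * C) + a * ((T + 1) ^ (2 * H) / (2 * H)) + 2 * (|σ| * C) := by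
  set L := max 1 (X₀ + |σ| * C)
  have h0T : (0:ℝ) ∈ Icc 0 T := ⟨le_rfl, ht.1.trans ht.2⟩
  have hσg : ∀ s ∈ Icc 0 T, |σ * g s| ≤ |σ| * C := fun s hs => by
    rw [abs_mul]; exact mul_le_mul_of_nonneg_left (hgC s hs) (abs_nonneg σ)
  have h0 : h 0 ≤ L := by
    have := hsol.eq h0T
    simp only [intervalIntegral.integral_same, mul_zero, add_zero, sub_zero] at this
    rw [this]
    exact le_max_of_le_right (by linarith [le_abs_self (σ * g 0), hσg 0 h0T])
  obtain ⟨τ, hτ, hτL, hL⟩ :=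
    (hsol.1.mono (Icc_subset_Icc_right ht.2)).exists_last_le ht.1 h0
  have hτT : τ ∈ Icc 0 T := ⟨hτ.1, hτ.2.trans ht.2⟩
  have h1 : ∀ s ∈ Ioo τ t, 1 < h s := fun s hs =>
    (le_max_left _ _).trans_lt (hL s (Ioo_subset_Ioc_self hs))
  have hdrift : ∫ s in τ..t, approxDrift H ε s (h s) ≤ (T + 1) ^ (2 * H) / (2 * H) := calc
    _ ≤ ∫ s in τ..t, (s + ε) ^ (2 * H - 1) :=
      intervalIntegral.integral_mono_on_of_le_Ioo hτ.2
        (hsol.intervalIntegrable_approxDrift hε hτT ht)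
        (by simpa using (intervalIntegral.intervalIntegrable_rpow' (r := 2 * H - 1)
          (by linarith) (a := τ + ε) (b := t + ε)).comp_add_right ε)
        fun s hs => approxDrift_le hε.le (by linarith [hτ.1, hs.1]) (h1 s hs).le
    _ ≤ (t + ε) ^ (2 * H - 1 + 1) / (2 * H - 1 + 1) :=
      integral_rpow_add_le (by linarith) (by linarith [hτ.1])
    _ ≤ (T + 1) ^ (2 * H) / (2 * H) := by
      rw [sub_add_cancel]
      gcongr
      · linarith [ht.1]
      · linarith [ht.2]
  have hh : 0 ≤ ∫ s in τ..t, h s :=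
    (intervalIntegral.integral_zero).symm.trans_le <| intervalIntegral.integral_mono_on_of_le_Ioo
      hτ.2 intervalIntegrable_const (hsol.intervalIntegrable hτT ht)
      fun s hs => by linarith [h1 s hs]
  have hnoise : σ * (g t - g τ) ≤ 2 * (|σ| * C) := by
    rw [mul_sub]
    linarith [le_abs_self (σ * g t), neg_abs_le (σ * g τ), hσg t ht, hσg τ hτT]
  linarith [hsol.sub_eq hε hτT ht, mul_le_mul_of_nonneg_left hdrift ha, mul_nonneg hb hh]

lemma abs_apply_le (hsol : approxSol X₀ a b σ H g T ε h) (ha : 0 ≤ a) (hb : 0 ≤ b)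
    (hε : 0 < ε) {U : ℝ} (hU0 : 0 ≤ U) (hU : ∀ t ∈ Icc 0 T, h t ≤ U)
    (hgC : ∀ t ∈ Icc 0 T, |g t| ≤ C) {t : ℝ} (ht : t ∈ Icc 0 T) : |h t| ≤ U + |X₀| + |σ| * C + b * T * U := by
  have h0T : (0:ℝ) ∈ Icc 0 T := ⟨le_rfl, ht.1.trans ht.2⟩
  have hdrift : 0 ≤ ∫ s in (0:ℝ)..t, approxDrift H ε s (h s) :=
    intervalIntegral.integral_nonneg ht.1 fun s hs => approxDrift_nonneg hε (by linarith [hs.1])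
  have hint : ∫ s in (0:ℝ)..t, h s ≤ T * U := calc
    _ ≤ ∫ _ in (0:ℝ)..t, U := intervalIntegral.integral_mono_on ht.1
        (hsol.intervalIntegrable h0T ht) intervalIntegrable_const
        fun s hs => hU s ⟨hs.1, hs.2.trans ht.2⟩
    _ ≤ T * U := by
      rw [intervalIntegral.integral_const, smul_eq_mul, sub_zero]
      exact mul_le_mul_of_nonneg_right ht.2 hU0
  have hσg : |σ * g t| ≤ |σ| * C := by
    rw [abs_mul]; exact mul_le_mul_of_nonneg_left (hgC t ht) (abs_nonneg σ)
  rw [_root_.abs_le]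
  have hbTU : 0 ≤ b * T * U := mul_nonneg (mul_nonneg hb (ht.1.trans ht.2)) hU0
  have hσC : 0 ≤ |σ| * C := (abs_nonneg _).trans hσg
  refine ⟨?_, by linarith [hU t ht, abs_nonneg X₀]⟩
  rw [hsol.eq ht]
  linarith [mul_nonneg ha hdrift, mul_le_mul_of_nonneg_left hint hb, neg_abs_le X₀,
    neg_abs_le (σ * g t)]

end approxSol

lemma exists_eventually_abs_approxSol_le {X₀ a b σ H T : ℝ} {g : ℝ → ℝ} {Xe : ℝ → ℝ → ℝ}
    (ha : 0 ≤ a) (hb : 0 ≤ b) (hH : 0 < H) (hT : 0 ≤ T) (hgc : ContinuousOn g (Icc 0 T))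
    (hXe : ∀ ε > 0, approxSol X₀ a b σ H g T ε (Xe ε)) :
    ∃ M, ∀ᶠ ε in 𝓝[>] (0:ℝ), ∀ t ∈ Icc 0 T, |Xe ε t| ≤ M := by
  obtain ⟨C, hC⟩ := isCompact_Icc.exists_bound_of_continuousOn hgc
  have hC0 : 0 ≤ C := (norm_nonneg _).trans (hC 0 ⟨le_rfl, hT⟩)
  set U := max 1 (X₀ + |σ| * C) + a * ((T + 1) ^ (2 * H) / (2 * H)) + 2 * (|σ| * C)
  have hU0 : 0 ≤ U := by positivity
  refine ⟨U + |X₀| + |σ| * C + b * T * U, ?_⟩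
  filter_upwards [Ioc_mem_nhdsGT one_pos] with ε hε t ht
  exact (hXe ε hε.1).abs_apply_le ha hb hε.1 hU0
    (fun s hs => (hXe ε hε.1).apply_le ha hb hH hε.1 hε.2 hC hs) hC ht

theorem limit_process_riemann_integrable_general
    (X₀ a b σ H : ℝ) (ha : 0 < a) (hb : 0 ≤ b)
    (hH0 : 0 < H)
    (g : ℝ → ℝ) (hgc : ContinuousOn g (Set.Ici 0))
    (Xe : ℝ → ℝ → ℝ)
    (hXe : ∀ ε > (0:ℝ), ∀ T > (0:ℝ), approxSol X₀ a b σ H g T ε (Xe ε))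
    (X : ℝ → ℝ)
    (hX : ∀ t ≥ (0:ℝ),
      Tendsto (fun ε => Xe ε t) (nhdsWithin 0 (Set.Ioi 0)) (nhds (X t)))
    :
    volume {t : ℝ | 0 ≤ t ∧ ¬ ContinuousWithinAt X (Set.Ici 0) t} = 0 ∧
    ∀ c d : ℝ, 0 ≤ c → c ≤ d →
      (∃ M : ℝ, ∀ t ∈ Set.Icc c d, |X t| ≤ M) ∧
      volume {t ∈ Set.Icc c d | ¬ ContinuousWithinAt X (Set.Icc c d) t} = 0 := by
  have hmeas : ∀ T > (0:ℝ), ∀ᶠ ε in 𝓝[>] (0:ℝ),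
      AEStronglyMeasurable (Xe ε) (volume.restrict (Icc 0 T)) := fun T hT =>
    eventually_mem_nhdsWithin.mono fun ε hε =>
      (hXe ε hε T hT).1.aestronglyMeasurable measurableSet_Icc
  have hbound : ∀ T > (0:ℝ), ∃ M, ∀ᶠ ε in 𝓝[>] (0:ℝ), ∀ t ∈ Icc 0 T, |Xe ε t| ≤ M :=
    fun T hT => exists_eventually_abs_approxSol_le ha.le hb hH0 hT.le
      (hgc.mono Icc_subset_Ici_self) fun ε hε => hXe ε hε T hT
  have hlim (T : ℝ) : ∀ t ∈ Icc 0 T, Tendsto (Xe · t) (𝓝[>] 0) (𝓝 (X t)) :=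
    fun t ht => hX t ht.1
  have hXint : ∀ t ≥ (0:ℝ), IntervalIntegrable X volume 0 t := fun t ht => by
    obtain ⟨M, hM⟩ := hbound (t + 1) (by linarith)
    refine (intervalIntegrable_of_tendsto (by linarith) (hmeas _ (by linarith)) hM
      (hlim _)).mono_set ?_
    rw [uIcc_of_le ht, uIcc_of_le (by linarith)]
    exact Icc_subset_Icc_right (by linarith)
  have hint : ∀ t ≥ (0:ℝ), Tendsto (fun ε => ∫ s in (0:ℝ)..t, Xe ε s) (𝓝[>] 0)
      (𝓝 (∫ s in (0:ℝ)..t, X s)) := fun t ht => by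
    obtain ⟨M, hM⟩ := hbound (t + 1) (by linarith)
    exact tendsto_intervalIntegral_of_tendsto (hmeas _ (by linarith)) hM (hlim _)
      ⟨ht, by linarith⟩
  have hmono : MonotoneOn (fun t => X t + (b * (∫ s in (0:ℝ)..t, X s) - σ * g t)) (Ici 0) := by
    intro s hs t ht hst
    simp only [← add_sub_assoc]
    refine le_of_tendsto_of_tendsto (((hX s hs).add ((hint s hs).const_mul b)).sub_const _)
      (((hX t ht).add ((hint t ht).const_mul b)).sub_const _) ?_
    filter_upwards [self_mem_nhdsWithin] with ε hε
    exact (hXe ε hε (t + 1) (by linarith [mem_Ici.1 ht])).monotoneOn ha.le hε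
      ⟨hs, by linarith⟩ ⟨ht, by linarith⟩ hst
  have hnull := (hmono.countable_not_continuousWithinAt_of_add
    ((continuousOn_const.mul (continuousOn_primitive_Ici hXint)).sub
      (continuousOn_const.mul hgc))).measure_zero volume
  refine ⟨hnull, fun c d hc _ => ⟨?_, measure_mono_null ?_ hnull⟩⟩
  · obtain ⟨M, hM⟩ := hbound (d + 1) (by linarith)
    exact ⟨M, fun t ht =>
      abs_le_of_tendsto hM (hlim _) t ⟨hc.trans ht.1, by linarith [ht.2]⟩⟩
  · rintro t ⟨ht, hdisc⟩
    exact ⟨hc.trans ht.1, fun h => hdisc (h.mono fun x hx => hc.trans hx.1)⟩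

/-- **Corollary 3.8.** The set of discontinuity points of `X` in `[0,∞)` is
Lebesgue-null; consequently (by Lebesgue's criterion) on every bounded interval
`[c,d] ⊂ [0,∞)` the process `X` is bounded and continuous almost everywhere,
i.e. Riemann integrable on `[c,d]`. -/
theorem limit_process_riemann_integrable
    (X₀ a b σ H : ℝ) (hX₀ : 0 < X₀) (ha : 0 < a) (hb : 0 ≤ b) (hσ : 0 < σ)
    (hH0 : 0 < H) (hH : H < 1/2)
    (g : ℝ → ℝ) (hgc : ContinuousOn g (Set.Ici 0)) (hg0 : g 0 = 0)
    (Xe : ℝ → ℝ → ℝ)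
    (hXe : ∀ ε > (0:ℝ), ∀ T > (0:ℝ), approxSol X₀ a b σ H g T ε (Xe ε))
    (X : ℝ → ℝ)
    (hX : ∀ t ≥ (0:ℝ),
      Tendsto (fun ε => Xe ε t) (nhdsWithin 0 (Set.Ioi 0)) (nhds (X t)))
    (β : ℝ) (hβ0 : 0 < β) (hβH : β < H)
    (hgH : ∀ T > (0:ℝ), ∃ C > (0:ℝ), ∀ s ∈ Set.Icc (0:ℝ) T, ∀ t ∈ Set.Icc (0:ℝ) T,
      |g t - g s| ≤ C * |t - s| ^ β)
    :
    volume {t : ℝ | 0 ≤ t ∧ ¬ ContinuousWithinAt X (Set.Ici 0) t} = 0 ∧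
    ∀ c d : ℝ, 0 ≤ c → c ≤ d →
      (∃ M : ℝ, ∀ t ∈ Set.Icc c d, |X t| ≤ M) ∧
      volume {t ∈ Set.Icc c d | ¬ ContinuousWithinAt X (Set.Icc c d) t} = 0 :=
  limit_process_riemann_integrable_general X₀ a b σ H ha hb hH0 g hgc Xe hXe X hX
end

section
/- Assume in addition that g is locally Hölder continuous of some order β ∈ (0, H). Let β₀ = sup{t ≥ 0 : X_s > 0 for all s ∈ [0,t]} be the right endpoint of the connected component of {t ≥ 0 : X_t > 0} containing 0. Then for every t ∈ [0, β₀] ∩ [0,∞), X_t = X₀ + a∫₀^t s^{2H−1}/X_s ds − b∫₀^t X_s ds + σ g(t), and if β₀ < ∞ then lim_{t↑β₀} X_t = 0 = X_{β₀}. -/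
/-!
Comparing the ε-equations at a last crossing time (the drift `(s+ε)^{2H-1} / (x⁺ + ε)` decreases
in `ε` and in `x`) shows that `X^ε` increases as `ε ↓ 0`, and is bounded above uniformly in `ε`;
hence `X = sup_ε X^ε` is lower semicontinuous and locally bounded. On a compact interval where
`X > 0`, compactness bounds `X^ε` below uniformly for small `ε`, so dominated convergence passes to
the limit in the ε-equation. At the end point `t` of an interval `[0, t)` where `X > 0`, the
integrals `∫₀ˣ s^{2H-1}/X_s`, `x < t`, are bounded by `lim_ε ∫₀ᵗ` of the ε-drift, which makes
`s^{2H-1}/X_s` integrable up to `t`. The limit equation then gives a left limit `l` of `X` at `t`;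
lower semicontinuity gives `X_t ≤ l`, and the same bound gives `l ≤ X_t`.
-/

open MeasureTheory Filter Set

open Topology
open scoped Interval

theorem le_of_forall_last_crossing {f : ℝ → ℝ} {a t c M : ℝ} (hat : a ≤ t)
    (hf : ContinuousOn f (Icc a t)) (ha : f a ≤ c) (hcM : c ≤ M)
    (hstep : ∀ u ∈ Ico a t, f u ≤ c → (∀ s ∈ Ioc u t, c < f s) → f t ≤ M) :
    f t ≤ M := by
  set S := Icc a t ∩ f ⁻¹' Iic c
  have hS : IsClosed S := hf.preimage_isClosed_of_isClosed isClosed_Icc isClosed_Iic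
  have hSbdd : BddAbove S := bddAbove_Icc.mono inter_subset_left
  have haS : a ∈ S := ⟨left_mem_Icc.2 hat, ha⟩
  obtain ⟨⟨hau, hut⟩, hfu⟩ : sSup S ∈ S := hS.csSup_mem ⟨a, haS⟩ hSbdd
  rcases hut.eq_or_lt with hut | hut
  · exact (hut ▸ hfu).trans hcM
  refine hstep _ ⟨hau, hut⟩ hfu fun s hs => not_le.1 fun hfs => ?_
  exact (le_csSup hSbdd ⟨⟨hau.trans hs.1.le, hs.2⟩, hfs⟩).not_gt hs.1

theorem IsCompact.eventually_forall_le_of_antitone {α : Type*} [TopologicalSpace α]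
    {K : Set α} (hK : IsCompact K) {f : ℝ → α → ℝ} (hf : ∀ ε > 0, Continuous (f ε))
    (hanti : ∀ x ∈ K, ∀ ε₁ ε₂, 0 < ε₁ → ε₁ ≤ ε₂ → f ε₂ x ≤ f ε₁ x)
    (hpos : ∀ x ∈ K, ∃ ε > 0, 0 < f ε x) :
    ∃ δ > 0, ∀ᶠ ε in 𝓝[>] 0, ∀ x ∈ K, δ ≤ f ε x := by
  -- `f` is antitone only on `K`, so the sets `{f ε > 0}` need not be nested; these are.
  let U : Ioi (0:ℝ) → Set α := fun ε => ⋃ ε' ∈ Ici (ε : ℝ), f ε' ⁻¹' Ioi 0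
  have hUo : ∀ ε, IsOpen (U ε) := fun ε => isOpen_biUnion fun ε' hε' =>
    isOpen_Ioi.preimage (hf ε' (ε.2.trans_le hε'))
  have hKU : K ⊆ ⋃ ε, U ε := fun x hx => by
    obtain ⟨ε, hε, hfx⟩ := hpos x hx
    exact mem_iUnion.2 ⟨⟨ε, hε⟩, mem_biUnion (mem_Ici.2 le_rfl) hfx⟩
  have hUanti : Antitone U := fun ε₁ ε₂ h =>
    biUnion_subset_biUnion_left (Ici_subset_Ici.2 h)
  obtain ⟨ε₀, hε₀⟩ := hK.elim_directed_cover U hUo hKU hUanti.directed_le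
  have hpos₀ : ∀ x ∈ K, 0 < f ε₀ x := fun x hx => by
    obtain ⟨ε', hε', hfx⟩ := mem_iUnion₂.1 (hε₀ hx)
    exact hfx.trans_le (hanti x hx _ _ ε₀.2 hε')
  obtain ⟨δ, hδ, hδle⟩ := hK.exists_forall_le' (hf ε₀ ε₀.2).continuousOn hpos₀
  refine ⟨δ, hδ, ?_⟩
  filter_upwards [Ioc_mem_nhdsGT ε₀.2] with ε hε x hx
  exact (hδle x hx).trans (hanti x hx _ _ hε.1 hε.2)

theorem integrableOn_Ioc_of_integral_le {f : ℝ → ℝ} {a b I : ℝ} (hab : a < b)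
    (hf0 : ∀ s ∈ Ioo a b, 0 ≤ f s) (hf : ∀ x ∈ Ioo a b, IntervalIntegrable f volume a x)
    (hI : ∀ x ∈ Ioo a b, ∫ s in a..x, f s ≤ I) : IntegrableOn f (Ioc a b) := by
  classical
  -- the library lemma quantifies over all indices, so the upper end point is kept inside `(a, b)`
  let c : ℝ → ℝ := fun x => if x ∈ Ioo a b then x else a
  refine integrableOn_Ioc_of_intervalIntegral_norm_bounded_right (l := 𝓝[<] b) (b := c) (I := I)
    (fun x => ?_) ?_ ?_
  · by_cases hx : x ∈ Ioo a b
    · simp only [c, if_pos hx]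
      exact (intervalIntegrable_iff_integrableOn_Ioc_of_le hx.1.le).1 (hf x hx)
    · simp only [c, if_neg hx, Ioc_self, integrableOn_empty]
  · refine tendsto_nhdsWithin_of_tendsto_nhds tendsto_id |>.congr' ?_
    filter_upwards [Ioo_mem_nhdsLT hab] with x hx
    simp only [c, if_pos hx, id]
  · filter_upwards [Ioo_mem_nhdsLT hab] with x hx
    have hnorm : ∫ s in Ioc a x, ‖f s‖ = ∫ s in a..x, f s := by
      rw [intervalIntegral.integral_of_le hx.1.le]
      refine setIntegral_congr_fun measurableSet_Ioc fun s hs => ?_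
      exact Real.norm_of_nonneg (hf0 s ⟨hs.1, hs.2.trans_lt hx.2⟩)
    simpa only [c, if_pos hx, hnorm] using hI x hx

theorem IntervalIntegrable.tendsto_integral_nhdsLT {E : Type*} [NormedAddCommGroup E]
    [NormedSpace ℝ E] {μ : Measure ℝ} [NullSingletonClass μ] {f : ℝ → E} {a b : ℝ} (hab : a < b)
    (hf : IntervalIntegrable f μ a b) :
    Tendsto (fun x => ∫ s in a..x, f s ∂μ) (𝓝[<] b) (𝓝 (∫ s in a..b, f s ∂μ)) := by
  refine ((intervalIntegral.continuousOn_primitive_interval' hf left_mem_uIcc) b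
    right_mem_uIcc).mono_of_mem_nhdsWithin ?_ |>.tendsto
  rw [uIcc_of_le hab.le]
  exact Icc_mem_nhdsLT hab

/-- `Xε ε` solves the ε-approximating equation for `t ≥ 0` with exponent `p = 2H - 1`, written with
`max x 0` for `x 1_{x > 0}`, and `Xε ε t → X t` as `ε ↓ 0`. Continuity is asked on all of `ℝ`,
which `first_component_equation` arranges by precomposing with `max · 0`. -/
structure ApproxFamily where
  X₀ : ℝ
  a : ℝ
  b : ℝ
  σ : ℝ
  p : ℝ
  g : ℝ → ℝ
  Xε : ℝ → ℝ → ℝ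
  X : ℝ → ℝ
  a_pos : 0 < a
  b_nonneg : 0 ≤ b
  neg_one_lt_p : -1 < p
  p_nonpos : p ≤ 0
  continuousOn_g : ContinuousOn g (Ici 0)
  g_zero : g 0 = 0
  continuous_Xε : ∀ ε > 0, Continuous (Xε ε)
  Xε_eq : ∀ ε > 0, ∀ t ≥ 0, Xε ε t = X₀ + a * (∫ s in 0..t, (s + ε) ^ p / (max (Xε ε s) 0 + ε))
    - b * (∫ s in 0..t, Xε ε s) + σ * g t
  tendsto_Xε : ∀ t ≥ 0, Tendsto (fun ε => Xε ε t) (𝓝[>] 0) (𝓝 (X t))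

namespace ApproxFamily

variable (S : ApproxFamily) {ε ε₁ ε₂ δ s t u x l : ℝ}

noncomputable def integrand (ε s : ℝ) : ℝ := (s + ε) ^ S.p / (max (S.Xε ε s) 0 + ε)

theorem integrand_nonneg (hε : 0 < ε) (hs : 0 ≤ s) : 0 ≤ S.integrand ε s := by
  unfold integrand
  positivity

theorem integrand_le_rpow_div (hε : 0 < ε) (hs : 0 < s) (hδ : 0 < δ) (hX : δ ≤ S.Xε ε s) :
    S.integrand ε s ≤ s ^ S.p / δ :=
  div_le_div₀ (by positivity) (Real.rpow_le_rpow_of_nonpos hs (by linarith) S.p_nonpos) hδ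
    (by linarith [le_max_left (S.Xε ε s) 0])

theorem integrand_le_integrand (hε₁ : 0 < ε₁) (h12 : ε₁ ≤ ε₂) (hs : 0 ≤ s)
    (hX : S.Xε ε₁ s ≤ S.Xε ε₂ s) : S.integrand ε₂ s ≤ S.integrand ε₁ s :=
  div_le_div₀ (by positivity) (Real.rpow_le_rpow_of_nonpos (by linarith) (by linarith) S.p_nonpos)
    (by positivity) (add_le_add (max_le_max_right 0 hX) h12)

theorem continuousOn_integrand (hε : 0 < ε) : ContinuousOn (S.integrand ε) (Ici 0) := by
  have hXε := S.continuous_Xε ε hε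
  refine ContinuousOn.div ?_ (by fun_prop) fun s _ => by positivity
  exact fun s (hs : 0 ≤ s) => (continuousAt_id.add continuousAt_const).rpow_const
    (Or.inl (add_pos_of_nonneg_of_pos hs hε).ne') |>.continuousWithinAt

theorem intervalIntegrable_integrand (hε : 0 < ε) (hu : 0 ≤ u) (ht : 0 ≤ t) :
    IntervalIntegrable (S.integrand ε) volume u t :=
  ((S.continuousOn_integrand hε).mono fun _ hx => (le_min hu ht).trans hx.1).intervalIntegrable

theorem Xε_eq_integrand (hε : 0 < ε) (ht : 0 ≤ t) :
    S.Xε ε t = S.X₀ + S.a * (∫ s in 0..t, S.integrand ε s)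
      - S.b * (∫ s in 0..t, S.Xε ε s) + S.σ * S.g t :=
  S.Xε_eq ε hε t ht

theorem Xε_zero (hε : 0 < ε) : S.Xε ε 0 = S.X₀ := by
  simpa [S.g_zero] using S.Xε_eq ε hε 0 le_rfl

theorem Xε_sub_Xε (hε : 0 < ε) (hu : 0 ≤ u) (ht : 0 ≤ t) :
    S.Xε ε t - S.Xε ε u = S.a * (∫ s in u..t, S.integrand ε s)
      - S.b * (∫ s in u..t, S.Xε ε s) + S.σ * (S.g t - S.g u) := by
  have hXε := (S.continuous_Xε ε hε).intervalIntegrable (μ := volume)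
  rw [S.Xε_eq_integrand hε ht, S.Xε_eq_integrand hε hu,
    ← intervalIntegral.integral_interval_sub_left (S.intervalIntegrable_integrand hε le_rfl ht)
      (S.intervalIntegrable_integrand hε le_rfl hu),
    ← intervalIntegral.integral_interval_sub_left (hXε 0 t) (hXε 0 u)]
  ring

theorem Xε_antitone (hε₁ : 0 < ε₁) (h12 : ε₁ ≤ ε₂) (ht : 0 ≤ t) : S.Xε ε₂ t ≤ S.Xε ε₁ t := by
  have hε₂ := hε₁.trans_le h12
  suffices (S.Xε ε₂ - S.Xε ε₁) t ≤ 0 from sub_nonpos.1 this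
  refine le_of_forall_last_crossing ht
    ((S.continuous_Xε ε₂ hε₂).sub (S.continuous_Xε ε₁ hε₁)).continuousOn
    (by simp [S.Xε_zero hε₁, S.Xε_zero hε₂]) le_rfl fun u hu hDu hD => ?_
  have hlt : ∀ s ∈ Ioo u t, S.Xε ε₁ s < S.Xε ε₂ s := fun s hs =>
    sub_pos.1 (hD s ⟨hs.1, hs.2.le⟩)
  have hF : ∫ s in u..t, S.integrand ε₂ s ≤ ∫ s in u..t, S.integrand ε₁ s :=
    intervalIntegral.integral_mono_on_of_le_Ioo hu.2.le
      (S.intervalIntegrable_integrand hε₂ hu.1 ht) (S.intervalIntegrable_integrand hε₁ hu.1 ht)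
      fun s hs => S.integrand_le_integrand hε₁ h12 (hu.1.trans hs.1.le) (hlt s hs).le
  have hX : ∫ s in u..t, S.Xε ε₁ s ≤ ∫ s in u..t, S.Xε ε₂ s :=
    intervalIntegral.integral_mono_on_of_le_Ioo hu.2.le
      ((S.continuous_Xε ε₁ hε₁).intervalIntegrable _ _)
      ((S.continuous_Xε ε₂ hε₂).intervalIntegrable _ _) fun s hs => (hlt s hs).le
  have h₁ := S.Xε_sub_Xε hε₁ hu.1 ht
  have h₂ := S.Xε_sub_Xε hε₂ hu.1 ht
  have ha := mul_le_mul_of_nonneg_left hF S.a_pos.le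
  have hb := mul_le_mul_of_nonneg_left hX S.b_nonneg
  simp only [Pi.sub_apply] at hDu ⊢
  linarith

theorem integral_integrand_le (hε : 0 < ε) (hu : 0 ≤ u) (hut : u ≤ t)
    (hX : ∀ s ∈ Ioo u t, 1 ≤ S.Xε ε s) :
    ∫ s in u..t, S.integrand ε s ≤ ∫ s in u..t, s ^ S.p := by
  simpa only [div_one] using intervalIntegral.integral_mono_on_of_le_Ioo hut
    (S.intervalIntegrable_integrand hε hu (hu.trans hut))
    ((intervalIntegral.intervalIntegrable_rpow' S.neg_one_lt_p).div_const 1)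
    fun s hs => S.integrand_le_rpow_div hε (hu.trans_lt hs.1) one_pos (hX s hs)

theorem exists_Xε_le (T : ℝ) : ∃ M, ∀ ε > 0, ∀ t ∈ Icc 0 T, S.Xε ε t ≤ M := by
  obtain ⟨G, hG⟩ := isCompact_Icc.exists_bound_of_continuousOn
    (S.continuousOn_g.mono fun _ hx => hx.1 : ContinuousOn S.g (Icc 0 T))
  set c := max 1 S.X₀
  set B := ∫ s in 0..T, s ^ S.p
  refine ⟨c + S.a * B + |S.σ| * (2 * G), fun ε hε t ht => ?_⟩
  have hB : 0 ≤ B := intervalIntegral.integral_nonneg (ht.1.trans ht.2)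
    fun s hs => Real.rpow_nonneg hs.1 _
  have hG0 : 0 ≤ G := (norm_nonneg _).trans (hG t ht)
  refine le_of_forall_last_crossing ht.1 (S.continuous_Xε ε hε).continuousOn
    ((S.Xε_zero hε).trans_le (le_max_right _ _))
    (by nlinarith [mul_nonneg S.a_pos.le hB, abs_nonneg S.σ]) fun u hu hXu hX => ?_
  have hX₁ : ∀ s ∈ Ioo u t, 1 ≤ S.Xε ε s := fun s hs =>
    (le_max_left _ _).trans (hX s ⟨hs.1, hs.2.le⟩).le
  have hF : ∫ s in u..t, S.integrand ε s ≤ B :=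
    (S.integral_integrand_le hε hu.1 hu.2.le hX₁).trans <|
      intervalIntegral.integral_mono_interval hu.1 hu.2.le ht.2
        (ae_restrict_of_forall_mem measurableSet_Ioc fun s hs => Real.rpow_nonneg hs.1.le _)
        (intervalIntegral.intervalIntegrable_rpow' S.neg_one_lt_p)
  have hXint : 0 ≤ ∫ s in u..t, S.Xε ε s := by
    simpa using intervalIntegral.integral_mono_on_of_le_Ioo hu.2.le intervalIntegrable_const
      ((S.continuous_Xε ε hε).intervalIntegrable _ _) fun s hs => zero_le_one.trans (hX₁ s hs)
  have hg : S.σ * (S.g t - S.g u) ≤ |S.σ| * (2 * G) := by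
    have hgt := hG t ht
    have hgu := hG u ⟨hu.1, hu.2.le.trans ht.2⟩
    rw [Real.norm_eq_abs] at hgt hgu
    calc S.σ * (S.g t - S.g u) ≤ |S.σ * (S.g t - S.g u)| := le_abs_self _
      _ ≤ |S.σ| * (2 * G) := by
        rw [abs_mul]
        gcongr
        linarith [abs_sub (S.g t) (S.g u)]
  have := S.Xε_sub_Xε hε hu.1 ht.1
  nlinarith [mul_le_mul_of_nonneg_left hF S.a_pos.le, mul_nonneg S.b_nonneg hXint]

theorem Xε_le_X (hε : 0 < ε) (ht : 0 ≤ t) : S.Xε ε t ≤ S.X t :=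
  ge_of_tendsto (S.tendsto_Xε t ht) <| by
    filter_upwards [Ioc_mem_nhdsGT hε] with ε' hε' using S.Xε_antitone hε'.1 hε'.2 ht

theorem X_zero : S.X 0 = S.X₀ :=
  tendsto_nhds_unique (S.tendsto_Xε 0 le_rfl) <| tendsto_const_nhds.congr' <| by
    filter_upwards [self_mem_nhdsWithin] with ε hε using (S.Xε_zero hε).symm

theorem exists_abs_le (T : ℝ) : ∃ C, (∀ ε ∈ Ioc 0 1, ∀ t ∈ Icc 0 T, |S.Xε ε t| ≤ C) ∧
    ∀ t ∈ Icc 0 T, |S.X t| ≤ C := by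
  obtain ⟨M, hM⟩ := S.exists_Xε_le T
  obtain ⟨m, hm⟩ := isCompact_Icc.exists_bound_of_continuousOn
    (S.continuous_Xε 1 one_pos).continuousOn (s := Icc 0 T)
  have hbound : ∀ ε ∈ Ioc (0 : ℝ) 1, ∀ t ∈ Icc 0 T, |S.Xε ε t| ≤ max m M := fun ε hε t ht => by
    have hlow := (neg_le_of_abs_le (hm t ht)).trans (S.Xε_antitone hε.1 hε.2 ht.1)
    exact abs_le.2 ⟨by linarith [le_max_left m M], (hM ε hε.1 t ht).trans (le_max_right m M)⟩
  refine ⟨max m M, hbound, fun t ht => ?_⟩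
  refine le_of_tendsto ((continuous_abs.tendsto _).comp (S.tendsto_Xε t ht.1)) ?_
  filter_upwards [Ioc_mem_nhdsGT one_pos] with ε hε using hbound ε hε t ht

theorem aestronglyMeasurable_X (ht : 0 ≤ t) :
    AEStronglyMeasurable S.X (volume.restrict (Ι 0 t)) := by
  have hseq : Tendsto (fun n : ℕ => 1 / ((n : ℝ) + 1)) atTop (𝓝[>] 0) :=
    tendsto_nhdsWithin_iff.2 ⟨tendsto_one_div_add_atTop_nhds_zero_nat,
      Eventually.of_forall fun _ => mem_Ioi.2 Nat.one_div_pos_of_nat⟩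
  refine aestronglyMeasurable_of_tendsto_ae (atTop : Filter ℕ)
    (f := fun n => S.Xε (1 / ((n : ℝ) + 1)))
    (fun n => (S.continuous_Xε _ Nat.one_div_pos_of_nat).aestronglyMeasurable) ?_
  refine ae_restrict_of_forall_mem measurableSet_uIoc fun s hs => (S.tendsto_Xε s ?_).comp hseq
  rw [uIoc_of_le ht] at hs
  exact hs.1.le

theorem intervalIntegrable_X (ht : 0 ≤ t) : IntervalIntegrable S.X volume 0 t := by
  obtain ⟨C, -, hC⟩ := S.exists_abs_le t
  refine (intervalIntegrable_const (c := C)).mono_fun' (S.aestronglyMeasurable_X ht) ?_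
  refine ae_restrict_of_forall_mem measurableSet_uIoc fun s hs => ?_
  rw [uIoc_of_le ht] at hs
  exact hC s ⟨hs.1.le, hs.2⟩

theorem tendsto_integral_Xε (ht : 0 ≤ t) :
    Tendsto (fun ε => ∫ s in 0..t, S.Xε ε s) (𝓝[>] 0) (𝓝 (∫ s in 0..t, S.X s)) := by
  obtain ⟨C, hC, -⟩ := S.exists_abs_le t
  refine intervalIntegral.tendsto_integral_filter_of_dominated_convergence (fun _ => C) ?_ ?_
    intervalIntegrable_const ?_
  · filter_upwards [self_mem_nhdsWithin] with ε hε
    exact (S.continuous_Xε ε hε).aestronglyMeasurable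
  · filter_upwards [Ioc_mem_nhdsGT one_pos] with ε hε
    refine ae_of_all _ fun s hs => ?_
    rw [uIoc_of_le ht] at hs
    exact hC ε hε s ⟨hs.1.le, hs.2⟩
  · refine ae_of_all _ fun s hs => S.tendsto_Xε s ?_
    rw [uIoc_of_le ht] at hs
    exact hs.1.le

theorem tendsto_integral_integrand (ht : 0 ≤ t) :
    Tendsto (fun ε => ∫ s in 0..t, S.integrand ε s) (𝓝[>] 0)
      (𝓝 ((S.X t - S.X₀ + S.b * (∫ s in 0..t, S.X s) - S.σ * S.g t) / S.a)) := by
  refine ((((S.tendsto_Xε t ht).sub_const S.X₀).add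
    ((S.tendsto_integral_Xε ht).const_mul S.b)).sub_const (S.σ * S.g t)).div_const S.a |>.congr' ?_
  filter_upwards [self_mem_nhdsWithin] with ε hε
  rw [S.Xε_eq_integrand hε ht]
  field_simp [S.a_pos.ne']
  ring

theorem tendsto_integrand (hs : 0 < s) (hX : 0 < S.X s) :
    Tendsto (fun ε => S.integrand ε s) (𝓝[>] 0) (𝓝 (s ^ S.p / S.X s)) := by
  have hnum : Tendsto (fun ε => (s + ε) ^ S.p) (𝓝[>] 0) (𝓝 ((s + 0) ^ S.p)) :=
    ((continuousAt_const.add continuousAt_id).rpow_const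
      (Or.inl (by simpa using hs.ne'))).tendsto.mono_left nhdsWithin_le_nhds
  have hden : Tendsto (fun ε => max (S.Xε ε s) 0 + ε) (𝓝[>] 0) (𝓝 (max (S.X s) 0 + 0)) :=
    ((S.tendsto_Xε s hs.le).max tendsto_const_nhds).add
      (tendsto_id.mono_left nhdsWithin_le_nhds)
  rw [add_zero] at hnum
  rw [add_zero, max_eq_left hX.le] at hden
  exact hnum.div hden hX.ne'

theorem exists_eventually_le_Xε (hpos : ∀ s ∈ Icc 0 u, 0 < S.X s) :
    ∃ δ > 0, ∀ᶠ ε in 𝓝[>] 0, ∀ s ∈ Icc 0 u, δ ≤ S.Xε ε s := by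
  refine isCompact_Icc.eventually_forall_le_of_antitone S.continuous_Xε
    (fun s hs _ _ h₁ h₁₂ => S.Xε_antitone h₁ h₁₂ hs.1) fun s hs => ?_
  obtain ⟨ε, hXε, hε⟩ :=
    (((S.tendsto_Xε s hs.1).eventually (lt_mem_nhds (hpos s hs))).and self_mem_nhdsWithin).exists
  exact ⟨ε, hε, hXε⟩

theorem intervalIntegrable_rpow_div_X (hu : 0 ≤ u) (hpos : ∀ s ∈ Icc 0 u, 0 < S.X s) :
    IntervalIntegrable (fun s => s ^ S.p / S.X s) volume 0 u := by
  obtain ⟨δ, hδ, hev⟩ := S.exists_eventually_le_Xε hpos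
  obtain ⟨ε, hδε, hε⟩ := (hev.and self_mem_nhdsWithin).exists
  refine ((intervalIntegral.intervalIntegrable_rpow' S.neg_one_lt_p).div_const δ).mono_fun'
    ((measurable_id.pow_const _).aemeasurable.div
      (S.aestronglyMeasurable_X hu).aemeasurable).aestronglyMeasurable ?_
  refine ae_restrict_of_forall_mem measurableSet_uIoc fun s hs => ?_
  rw [uIoc_of_le hu] at hs
  have hδX := (hδε s ⟨hs.1.le, hs.2⟩).trans (S.Xε_le_X hε hs.1.le)
  dsimp only
  have hrpow := Real.rpow_nonneg hs.1.le S.p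
  rw [Real.norm_of_nonneg (div_nonneg hrpow (hδ.le.trans hδX))]
  exact div_le_div_of_nonneg_left hrpow hδ hδX

theorem tendsto_integral_integrand_of_pos (hu : 0 ≤ u) (hpos : ∀ s ∈ Icc 0 u, 0 < S.X s) :
    Tendsto (fun ε => ∫ s in 0..u, S.integrand ε s) (𝓝[>] 0)
      (𝓝 (∫ s in 0..u, s ^ S.p / S.X s)) := by
  obtain ⟨δ, hδ, hev⟩ := S.exists_eventually_le_Xε hpos
  refine intervalIntegral.tendsto_integral_filter_of_dominated_convergence (fun s => s ^ S.p / δ)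
    ?_ ?_ ((intervalIntegral.intervalIntegrable_rpow' S.neg_one_lt_p).div_const δ) ?_
  · filter_upwards [self_mem_nhdsWithin] with ε hε
    exact (S.intervalIntegrable_integrand hε le_rfl hu).def'.aestronglyMeasurable
  · filter_upwards [hev, self_mem_nhdsWithin] with ε hδε hε
    refine ae_of_all _ fun s hs => ?_
    rw [uIoc_of_le hu] at hs
    rw [Real.norm_of_nonneg (S.integrand_nonneg hε hs.1.le)]
    exact S.integrand_le_rpow_div hε hs.1 hδ (hδε s ⟨hs.1.le, hs.2⟩)
  · refine ae_of_all _ fun s hs => ?_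
    rw [uIoc_of_le hu] at hs
    exact S.tendsto_integrand hs.1 (hpos s ⟨hs.1.le, hs.2⟩)

theorem X_eq_of_pos_Icc (hu : 0 ≤ u) (hpos : ∀ s ∈ Icc 0 u, 0 < S.X s) :
    S.X u = S.X₀ + S.a * (∫ s in 0..u, s ^ S.p / S.X s)
      - S.b * (∫ s in 0..u, S.X s) + S.σ * S.g u := by
  have h := tendsto_nhds_unique (S.tendsto_integral_integrand_of_pos hu hpos)
    (S.tendsto_integral_integrand hu)
  rw [h, mul_div_cancel₀ _ S.a_pos.ne']
  ring

theorem X_le_of_tendsto_nhdsLT (ht : 0 < t) (h : Tendsto S.X (𝓝[<] t) (𝓝 l)) : S.X t ≤ l := by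
  refine le_of_tendsto (S.tendsto_Xε t ht.le) ?_
  filter_upwards [self_mem_nhdsWithin] with ε hε
  refine le_of_tendsto_of_tendsto
    ((S.continuous_Xε ε hε).tendsto t |>.mono_left nhdsWithin_le_nhds) h ?_
  filter_upwards [Ioo_mem_nhdsLT ht] with x hx using S.Xε_le_X hε hx.1.le

theorem integral_rpow_div_X_le (hx : 0 ≤ x) (hxt : x ≤ t) (hpos : ∀ s ∈ Icc 0 x, 0 < S.X s) :
    ∫ s in 0..x, s ^ S.p / S.X s
      ≤ (S.X t - S.X₀ + S.b * (∫ s in 0..t, S.X s) - S.σ * S.g t) / S.a := by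
  refine le_of_tendsto_of_tendsto (S.tendsto_integral_integrand_of_pos hx hpos)
    (S.tendsto_integral_integrand (hx.trans hxt)) ?_
  filter_upwards [self_mem_nhdsWithin] with ε hε
  exact intervalIntegral.integral_mono_interval le_rfl hx hxt
    (ae_restrict_of_forall_mem measurableSet_Ioc fun s hs => S.integrand_nonneg hε hs.1.le)
    (S.intervalIntegrable_integrand hε le_rfl (hx.trans hxt))

theorem intervalIntegrable_rpow_div_X_of_pos_Ico (ht : 0 < t)
    (hpos : ∀ s ∈ Ico 0 t, 0 < S.X s) :
    IntervalIntegrable (fun s => s ^ S.p / S.X s) volume 0 t := by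
  have hposIcc : ∀ x ∈ Ioo 0 t, ∀ s ∈ Icc 0 x, 0 < S.X s :=
    fun x hx s hs => hpos s ⟨hs.1, hs.2.trans_lt hx.2⟩
  refine (intervalIntegrable_iff_integrableOn_Ioc_of_le ht.le).2 <|
    integrableOn_Ioc_of_integral_le ht
      (fun s hs => div_nonneg (Real.rpow_nonneg hs.1.le _) (hpos s ⟨hs.1.le, hs.2⟩).le)
      (fun x hx => S.intervalIntegrable_rpow_div_X hx.1.le (hposIcc x hx))
      fun x hx => S.integral_rpow_div_X_le hx.1.le hx.2.le (hposIcc x hx)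

theorem X_eq_and_tendsto_of_pos_Ico (ht : 0 < t) (hpos : ∀ s ∈ Ico 0 t, 0 < S.X s) :
    S.X t = S.X₀ + S.a * (∫ s in 0..t, s ^ S.p / S.X s)
      - S.b * (∫ s in 0..t, S.X s) + S.σ * S.g t ∧
    Tendsto S.X (𝓝[<] t) (𝓝 (S.X t)) := by
  have hposIcc : ∀ x ∈ Ioo 0 t, ∀ s ∈ Icc 0 x, 0 < S.X s :=
    fun x hx s hs => hpos s ⟨hs.1, hs.2.trans_lt hx.2⟩
  have hf := S.intervalIntegrable_rpow_div_X_of_pos_Ico ht hpos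
  have hfL : ∫ s in 0..t, s ^ S.p / S.X s
      ≤ (S.X t - S.X₀ + S.b * (∫ s in 0..t, S.X s) - S.σ * S.g t) / S.a :=
    le_of_tendsto (hf.tendsto_integral_nhdsLT ht) <| by
      filter_upwards [Ioo_mem_nhdsLT ht] with x hx
      exact S.integral_rpow_div_X_le hx.1.le hx.2.le (hposIcc x hx)
  have hg : Tendsto S.g (𝓝[<] t) (𝓝 (S.g t)) :=
    ((S.continuousOn_g t ht.le).mono_of_mem_nhdsWithin
      (mem_of_superset (Ioo_mem_nhdsLT ht) fun _ hx => hx.1.le)).tendsto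
  have hlim : Tendsto S.X (𝓝[<] t) (𝓝 (S.X₀ + S.a * (∫ s in 0..t, s ^ S.p / S.X s)
      - S.b * (∫ s in 0..t, S.X s) + S.σ * S.g t)) := by
    refine (((((hf.tendsto_integral_nhdsLT ht).const_mul S.a).const_add S.X₀).sub
      (((S.intervalIntegrable_X ht.le).tendsto_integral_nhdsLT ht).const_mul S.b)).add
      (hg.const_mul S.σ)).congr' ?_
    filter_upwards [Ioo_mem_nhdsLT ht] with x hx
    exact (S.X_eq_of_pos_Icc hx.1.le (hposIcc x hx)).symm
  have hXt : S.X t = S.X₀ + S.a * (∫ s in 0..t, s ^ S.p / S.X s)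
      - S.b * (∫ s in 0..t, S.X s) + S.σ * S.g t := by
    refine le_antisymm (S.X_le_of_tendsto_nhdsLT ht hlim) ?_
    have haL := mul_le_mul_of_nonneg_left hfL S.a_pos.le
    rw [mul_div_cancel₀ _ S.a_pos.ne'] at haL
    linarith
  exact ⟨hXt, hXt ▸ hlim⟩

end ApproxFamily

section approxSol

variable {X₀ a b σ H ε : ℝ} {g Y : ℝ → ℝ}

theorem continuous_comp_max_of_approxSol (hY : ∀ T > 0, approxSol X₀ a b σ H g T ε Y) :
    Continuous fun s => Y (max s 0) := by
  refine ContinuousOn.comp_continuous (s := Ici 0) (fun x (hx : 0 ≤ x) => ?_) (by fun_prop)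
    fun s => le_max_right s 0
  refine ((hY (x + 1) (by linarith)).1 x ⟨hx, by linarith⟩).mono_of_mem_nhdsWithin ?_
  rw [← Ici_inter_Iic]
  exact inter_mem_nhdsWithin _ (Iic_mem_nhds (by linarith))

theorem eq_comp_max_of_approxSol (hY : ∀ T > 0, approxSol X₀ a b σ H g T ε Y) {t : ℝ}
    (ht : 0 ≤ t) :
    Y (max t 0) = X₀ + a * (∫ s in 0..t, (s + ε) ^ (2 * H - 1) / (max (Y (max s 0)) 0 + ε))
      - b * (∫ s in 0..t, Y (max s 0)) + σ * g t := by
  have hmax : ∀ s ∈ [[0, t]], Y (max s 0) = Y s := fun s hs => by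
    rw [uIcc_of_le ht] at hs
    rw [max_eq_left hs.1]
  have hF : ∫ s in 0..t, (s + ε) ^ (2 * H - 1) / ((if 0 < Y s then Y s else 0) + ε)
      = ∫ s in 0..t, (s + ε) ^ (2 * H - 1) / (max (Y (max s 0)) 0 + ε) :=
    intervalIntegral.integral_congr fun s hs => by
      simp only [hmax s hs]
      split_ifs with h
      · rw [max_eq_left h.le]
      · rw [max_eq_right (not_lt.1 h)]
  rw [max_eq_left ht, (hY (t + 1) (by linarith)).2 t ⟨ht, by linarith⟩, hF,
    intervalIntegral.integral_congr hmax]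

end approxSol

/-- A point `t ≥ 0` lies in `[0, β₀]` iff `X > 0` on `[0, t)`; `β₀ < ∞` is encoded by `X > 0` on
`[0, β₀)` and `X β₀ ≤ 0`. -/
theorem first_component_equation_general
    (X₀ a b σ H : ℝ) (ha : 0 < a) (hb : 0 ≤ b)
    (hH0 : 0 < H) (hH : H < 1/2)
    (g : ℝ → ℝ) (hgc : ContinuousOn g (Set.Ici 0)) (hg0 : g 0 = 0)
    (Xe : ℝ → ℝ → ℝ)
    (hXe : ∀ ε > (0:ℝ), ∀ T > (0:ℝ), approxSol X₀ a b σ H g T ε (Xe ε))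
    (X : ℝ → ℝ)
    (hX : ∀ t ≥ (0:ℝ),
      Tendsto (fun ε => Xe ε t) (nhdsWithin 0 (Set.Ioi 0)) (nhds (X t)))
    :
    (∀ t ≥ (0:ℝ), (∀ s ∈ Set.Ico (0:ℝ) t, 0 < X s) →
      X t = X₀ + a * (∫ s in (0:ℝ)..t, s ^ (2 * H - 1) / X s)
        - b * (∫ s in (0:ℝ)..t, X s) + σ * g t) ∧
    (∀ β₀ > (0:ℝ), (∀ s ∈ Set.Ico (0:ℝ) β₀, 0 < X s) → X β₀ ≤ 0 →
      Tendsto X (nhdsWithin β₀ (Set.Iio β₀)) (nhds 0) ∧ X β₀ = 0) := by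
  let S : ApproxFamily :=
    { X₀, a, b, σ, p := 2 * H - 1, g, Xε := fun ε s => Xe ε (max s 0), X
      a_pos := ha, b_nonneg := hb, neg_one_lt_p := by linarith, p_nonpos := by linarith
      continuousOn_g := hgc, g_zero := hg0
      continuous_Xε := fun ε hε => continuous_comp_max_of_approxSol (hXe ε hε)
      Xε_eq := fun ε hε t ht => eq_comp_max_of_approxSol (hXe ε hε) ht
      tendsto_Xε := fun t ht => by simpa only [max_eq_left ht] using hX t ht }
  refine ⟨fun t ht hpos => ?_, fun β₀ hβ₀ hpos hle => ?_⟩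
  · rcases ht.eq_or_lt with rfl | ht
    · simpa [hg0] using S.X_zero
    · exact (S.X_eq_and_tendsto_of_pos_Ico ht hpos).1
  · have hlim := (S.X_eq_and_tendsto_of_pos_Ico hβ₀ hpos).2
    have hX0 : X β₀ = 0 := le_antisymm hle <| ge_of_tendsto hlim <| by
      filter_upwards [Ioo_mem_nhdsLT hβ₀] with x hx using (hpos x ⟨hx.1.le, hx.2⟩).le
    exact ⟨hX0 ▸ hlim, hX0⟩

/-- **Remark 3.10.** On the connected component of `{t ≥ 0 : X_t > 0}` containing
`0` (with right endpoint `β₀`), `X` satisfies the singular equation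
`X_t = X₀ + a∫₀ᵗ s^{2H-1}/X_s ds − b∫₀ᵗ X_s ds + σ g(t)`; a point `t ≥ 0` belongs
to `[0, β₀]` iff `X > 0` on `[0, t)`.  Moreover, if `β₀ < ∞` (encoded by:
`X > 0` on `[0, β₀)` but not at `β₀`), then `lim_{t↑β₀} X_t = 0 = X_{β₀}`. -/
theorem first_component_equation
    (X₀ a b σ H : ℝ) (hX₀ : 0 < X₀) (ha : 0 < a) (hb : 0 ≤ b) (hσ : 0 < σ)
    (hH0 : 0 < H) (hH : H < 1/2)
    (g : ℝ → ℝ) (hgc : ContinuousOn g (Set.Ici 0)) (hg0 : g 0 = 0)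
    (Xe : ℝ → ℝ → ℝ)
    (hXe : ∀ ε > (0:ℝ), ∀ T > (0:ℝ), approxSol X₀ a b σ H g T ε (Xe ε))
    (X : ℝ → ℝ)
    (hX : ∀ t ≥ (0:ℝ),
      Tendsto (fun ε => Xe ε t) (nhdsWithin 0 (Set.Ioi 0)) (nhds (X t)))
    (β : ℝ) (hβ0 : 0 < β) (hβH : β < H)
    (hgH : ∀ T > (0:ℝ), ∃ C > (0:ℝ), ∀ s ∈ Set.Icc (0:ℝ) T, ∀ t ∈ Set.Icc (0:ℝ) T,
      |g t - g s| ≤ C * |t - s| ^ β)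
    :
    (∀ t ≥ (0:ℝ), (∀ s ∈ Set.Ico (0:ℝ) t, 0 < X s) →
      X t = X₀ + a * (∫ s in (0:ℝ)..t, s ^ (2 * H - 1) / X s)
        - b * (∫ s in (0:ℝ)..t, X s) + σ * g t) ∧
    (∀ β₀ > (0:ℝ), (∀ s ∈ Set.Ico (0:ℝ) β₀, 0 < X s) → X β₀ ≤ 0 →
      Tendsto X (nhdsWithin β₀ (Set.Iio β₀)) (nhds 0) ∧ X β₀ = 0) :=
  first_component_equation_general X₀ a b σ H ha hb hH0 hH g hgc hg0 Xe hXe X hX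
end
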